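/- arXiv:0911.3100 — 5 statements merged into one kernel-verified Lean document; each statement's English description precedes it below -/
import Mathlib

section
/- For every integer k ≥ 0 and real numbers x, y, z₁, …, z_k > 0 with x + y + z₁ + ⋯ + z_k < 1, one has q_k(x; y; z₁, …, z_k) = (y/(x+y)) · p_{k+1}(x+y, z₁, …, z_k) − p_{k+2}(y, z₁, …, z_k, 1 − x − y − z₁ − ⋯ − z_k). -/
/-- ICM probability that given players holding chip fractions `l = [x₁, …, x_k]`
finish 1st through kth in that order:
`p_k(x₁,…,x_k) = (x₁⋯x_k) / ((1-x₁)(1-x₁-x₂)⋯(1-x₁-⋯-x_{k-1}))`. -/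
noncomputable def icmP (l : List ℝ) : ℝ :=
  l.prod / ∏ i ∈ Finset.range (l.length - 1), (1 - ((l.take (i + 1)).sum))

/-- `q_k(x; y; z₁,…,z_k) = Σ_{i=0}^{k} p_{k+2}(y, z₁,…,z_i, x, z_{i+1},…,z_k)`:
the ICM probability that the player with fraction `y` finishes first, players with
fractions `z₁,…,z_k` finish in that relative order among the top `k+2`, and the
player with fraction `x` finishes somewhere among the top `k+2`. -/
noncomputable def icmQ (x y : ℝ) (z : List ℝ) : ℝ :=
  ∑ i ∈ Finset.range (z.length + 1), icmP (y :: (z.take i ++ x :: z.drop i))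

/-!
Induct on `z` by appending a last entry `b`. Both `p` and `q` factor through the removal of
the last finisher: appending `b` to a finishing order multiplies its ICM probability by
`b / (1 - s)`, where `s` is the chip total of the players placed before it. Hence
`q(z ++ [b])` is `q(z)` times the factor for `b` (when `x` is placed before `b`) plus the
single term with `x` placed last, and the induction step reduces to an identity between
rational functions.
-/

theorem icmP_singleton (a : ℝ) : icmP [a] = a := by
  simp [icmP]

theorem icmP_pair (a b : ℝ) : icmP [a, b] = a * b / (1 - a) := by
  simp [icmP]

theorem icmP_append_singleton (l : List ℝ) (b : ℝ) :
    icmP (l ++ [b]) = icmP l * (b / (1 - l.sum)) := by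
  cases l with
  | nil => simp [icmP]
  | cons a t =>
    have hprefix : ∀ i ∈ Finset.range t.length,
        1 - ((a :: t ++ [b]).take (i + 1)).sum = 1 - ((a :: t).take (i + 1)).sum := by
      intro i hi
      rw [List.take_append_of_le_length (by simpa using (Finset.mem_range.mp hi).le)]
    have hfull : ((a :: t ++ [b]).take (t.length + 1)).sum = (a :: t).sum := by
      rw [List.take_append_of_le_length (by simp), List.take_of_length_le (by simp)]
    have hlen : (a :: t ++ [b]).length - 1 = t.length + 1 := by simp
    rw [icmP, icmP, hlen, Finset.prod_range_succ, Finset.prod_congr rfl hprefix, hfull,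
      List.prod_append, List.prod_singleton, mul_div_mul_comm, List.length_cons,
      Nat.add_sub_cancel]

theorem icmP_cons_append_singleton (a : ℝ) (l : List ℝ) (b : ℝ) :
    icmP (a :: (l ++ [b])) = icmP (a :: l) * (b / (1 - (a + l.sum))) := by
  simpa using icmP_append_singleton (a :: l) b

theorem icmQ_append_singleton (x y : ℝ) (t : List ℝ) (b : ℝ) :
    icmQ x y (t ++ [b]) = icmQ x y t * (b / (1 - (x + y + t.sum)))
      + icmP (y :: t) * (b / (1 - (y + t.sum))) * (x / (1 - (y + (t.sum + b)))) := by
  unfold icmQ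
  rw [List.length_append, List.length_singleton, Finset.sum_range_succ, Finset.sum_mul]
  congr 1
  · refine Finset.sum_congr rfl fun i hmem => ?_
    have hi : i ≤ t.length := Nat.lt_succ_iff.mp (Finset.mem_range.mp hmem)
    have hsplit : (t.take i).sum + (t.drop i).sum = t.sum := by
      rw [← List.sum_append, List.take_append_drop]
    rw [List.take_append_of_le_length hi, List.drop_append_of_le_length hi,
      show y :: (t.take i ++ x :: (t.drop i ++ [b])) = y :: ((t.take i ++ x :: t.drop i) ++ [b])
        by simp, icmP_cons_append_singleton]
    simp only [List.sum_append, List.sum_cons]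
    congr 3
    linarith
  · rw [List.take_of_length_le (by simp), List.drop_of_length_le (by simp),
      icmP_cons_append_singleton, icmP_cons_append_singleton, List.sum_append,
      List.sum_singleton]

theorem icmQ_eq_sub_of_pos (x y : ℝ) (hx : 0 < x) (hy : 0 < y) (z : List ℝ)
    (hz : ∀ a ∈ z, 0 < a) (hsum : x + y + z.sum < 1) :
    icmQ x y z = y / (x + y) * icmP ((x + y) :: z)
      - icmP (y :: (z ++ [1 - x - y - z.sum])) := by
  induction z using List.reverseRecOn with
  | nil =>
    have hy1 : 1 - y ≠ 0 := by rw [List.sum_nil] at hsum; linarith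
    have hxy : x + y ≠ 0 := by linarith
    have hq : icmQ x y [] = icmP [y, x] := by simp [icmQ]
    rw [hq, List.nil_append, List.sum_nil, sub_zero, icmP_pair, icmP_pair, icmP_singleton]
    field_simp
    ring
  | append_singleton t b ih =>
    have hb : 0 < b := hz b (by simp)
    rw [List.sum_append, List.sum_singleton] at hsum ⊢
    rw [icmQ_append_singleton, ih (fun a ha => hz a (by simp [ha])) (by linarith)]
    simp only [icmP_cons_append_singleton, List.sum_append, List.sum_singleton]
    have h1 : 1 - (y + t.sum) ≠ 0 := by linarith
    have h2 : 1 - (y + (t.sum + b)) ≠ 0 := by linarith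
    have h3 : 1 - (x + y + t.sum) ≠ 0 := by linarith
    have h4 : x + y ≠ 0 := by linarith
    field_simp
    ring

theorem icm_q_partial_fraction (k : ℕ) (x y : ℝ) (z : Fin k → ℝ)
    (hx : 0 < x) (hy : 0 < y) (hz : ∀ i, 0 < z i)
    (hsum : x + y + ∑ i, z i < 1) :
    icmQ x y (List.ofFn z)
      = y / (x + y) * icmP ((x + y) :: List.ofFn z)
        - icmP (y :: (List.ofFn z ++ [1 - x - y - ∑ i, z i])) := by
  have hpos : ∀ a ∈ List.ofFn z, 0 < a := by
    simpa [List.mem_ofFn] using hz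
  simpa [List.sum_ofFn] using
    icmQ_eq_sub_of_pos x y hx hy (List.ofFn z) hpos (by rwa [List.sum_ofFn])
end

section
/- Fix an integer k ≥ 0 and real numbers x, y, z₁, …, z_k > 0 with x + y + z₁ + ⋯ + z_k < 1. Then the function w ↦ q_k(x − w; y + w; z₁, …, z_k) is strictly concave on the open interval −y < w < x. -/
open Finset Set

noncomputable def auxP (c : ℝ) (l : List ℝ) : ℝ :=
  l.prod / ∏ i ∈ Finset.range l.length, (c - (l.take i).sum)

noncomputable def auxQ (c x : ℝ) (zs : List ℝ) : ℝ :=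
  ∑ i ∈ Finset.range (zs.length + 1), auxP c (zs.take i ++ x :: zs.drop i)

lemma auxP_cons (c a : ℝ) (m : List ℝ) :
    auxP c (a :: m) = (a / c) * auxP (c - a) m := by
  unfold auxP
  rw [List.prod_cons, List.length_cons, Finset.prod_range_succ']
  simp only [List.take_succ_cons, List.take_zero, List.sum_cons, List.sum_nil, sub_zero]
  rw [show (∏ i ∈ Finset.range m.length, (c - (a + (m.take i).sum)))
      = ∏ i ∈ Finset.range m.length, (c - a - (m.take i).sum) from
    Finset.prod_congr rfl fun i _ => by ring]
  rw [mul_comm (∏ i ∈ Finset.range m.length, (c - a - (m.take i).sum)) c,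
    mul_div_mul_comm]

lemma icmP_cons (a : ℝ) (m : List ℝ) : icmP (a :: m) = a * auxP (1 - a) m := by
  unfold icmP auxP
  rw [List.prod_cons, List.length_cons, Nat.add_sub_cancel]
  simp only [List.take_succ_cons, List.sum_cons]
  rw [show (∏ i ∈ Finset.range m.length, (1 - (a + (m.take i).sum)))
      = ∏ i ∈ Finset.range m.length, (1 - a - (m.take i).sum) from
    Finset.prod_congr rfl fun i _ => by ring]
  rw [mul_div_assoc]

lemma icmQ_eq_auxQ (x y : ℝ) (zs : List ℝ) :
    icmQ x y zs = y * auxQ (1 - y) x zs := by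
  unfold icmQ auxQ
  rw [Finset.mul_sum]
  exact Finset.sum_congr rfl fun i _ => icmP_cons y _

lemma take_sum_le {l : List ℝ} (h : ∀ z ∈ l, 0 < z) (i : ℕ) : (l.take i).sum ≤ l.sum := by
  conv_rhs => rw [← List.take_append_drop i l]
  rw [List.sum_append]
  have : 0 ≤ (l.drop i).sum :=
    List.sum_nonneg fun z hz => (h z (List.mem_of_mem_drop hz)).le
  linarith

lemma sum_nonneg' {l : List ℝ} (h : ∀ z ∈ l, 0 < z) : 0 ≤ l.sum :=
  List.sum_nonneg fun z hz => (h z hz).le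

lemma auxQ_eq (x : ℝ) (hx : 0 < x) :
    ∀ (zs : List ℝ) (c : ℝ), (∀ z ∈ zs, 0 < z) → 0 < c - x - zs.sum →
    auxQ c x zs = zs.prod *
      ((∏ i ∈ Finset.range (zs.length + 1), (c - (zs.take i).sum)) -
        ∏ i ∈ Finset.range (zs.length + 1), (c - x - (zs.take i).sum)) /
      ((∏ i ∈ Finset.range (zs.length + 1), (c - (zs.take i).sum)) *
        ∏ i ∈ Finset.range zs.length, (c - x - (zs.take i).sum))
  | [], c, _, hc => by
      unfold auxQ auxP
      simp
  | z₀ :: t, c, hpos, hc => by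
      have hz₀ : 0 < z₀ := hpos z₀ (by simp)
      have htpos : ∀ z ∈ t, 0 < z := fun z hz => hpos z (by simp [hz])
      have hts : 0 ≤ t.sum := sum_nonneg' htpos
      have hsc : (z₀ :: t).sum = z₀ + t.sum := List.sum_cons
      have hc' : 0 < (c - z₀) - x - t.sum := by rw [hsc] at hc; linarith
      have IH := auxQ_eq x hx t (c - z₀) htpos hc'
      -- abbreviations
      set E := ∏ i ∈ Finset.range (t.length + 1), (c - z₀ - (t.take i).sum) with hE
      set F := ∏ i ∈ Finset.range (t.length + 1), (c - z₀ - x - (t.take i).sum) with hF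
      set G := ∏ i ∈ Finset.range t.length, (c - z₀ - x - (t.take i).sum) with hG
      have hEpos : 0 < E := Finset.prod_pos fun i _ => by
        have := take_sum_le htpos i; linarith
      have hFpos : 0 < F := Finset.prod_pos fun i _ => by
        have := take_sum_le htpos i; linarith
      have hGpos : 0 < G := Finset.prod_pos fun i _ => by
        have := take_sum_le htpos i; linarith
      have hcpos : 0 < c := by rw [hsc] at hc; linarith
      have hcx : 0 < c - x := by rw [hsc] at hc; linarith
      -- LHS recursion
      have hlhs : auxQ c x (z₀ :: t)
          = (z₀ / c) * auxQ (c - z₀) x t + (x / c) * ((z₀ / (c - x)) * (t.prod / G)) := by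
        unfold auxQ
        rw [List.length_cons, Finset.sum_range_succ']
        simp only [List.take_succ_cons, List.drop_succ_cons, List.take_zero, List.drop_zero,
          List.nil_append, List.cons_append]
        rw [Finset.mul_sum]
        congr 1
        · exact Finset.sum_congr rfl fun i _ => auxP_cons c z₀ _
        · rw [auxP_cons, auxP_cons]
          unfold auxP
          rw [show (∏ i ∈ Finset.range t.length, (c - x - z₀ - (t.take i).sum)) = G from
            Finset.prod_congr rfl fun i _ => by ring]
      -- RHS product decompositions
      have hA : (∏ i ∈ Finset.range ((z₀ :: t).length + 1), (c - ((z₀ :: t).take i).sum))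
          = E * c := by
        rw [List.length_cons, Finset.prod_range_succ']
        simp only [List.take_succ_cons, List.sum_cons, List.take_zero, List.sum_nil, sub_zero]
        congr 1
        exact Finset.prod_congr rfl fun i _ => by ring
      have hB : (∏ i ∈ Finset.range ((z₀ :: t).length + 1), (c - x - ((z₀ :: t).take i).sum))
          = F * (c - x) := by
        rw [List.length_cons, Finset.prod_range_succ']
        simp only [List.take_succ_cons, List.sum_cons, List.take_zero, List.sum_nil, sub_zero]
        congr 1
        exact Finset.prod_congr rfl fun i _ => by ring
      have hC : (∏ i ∈ Finset.range (z₀ :: t).length, (c - x - ((z₀ :: t).take i).sum))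
          = G * (c - x) := by
        rw [List.length_cons, Finset.prod_range_succ']
        simp only [List.take_succ_cons, List.sum_cons, List.take_zero, List.sum_nil, sub_zero]
        congr 1
        exact Finset.prod_congr rfl fun i _ => by ring
      rw [hlhs, IH, hA, hB, hC, List.prod_cons]
      field_simp
      ring

/-- Product of two positive, strictly increasing, convex functions is strictly convex. -/
lemma strictConvexOn_mul_aux {s : Set ℝ} {f g : ℝ → ℝ}
    (hf : ConvexOn ℝ s f) (hg : ConvexOn ℝ s g)
    (hfm : StrictMonoOn f s) (hgm : StrictMonoOn g s)
    (hf0 : ∀ w ∈ s, 0 < f w) (hg0 : ∀ w ∈ s, 0 < g w) :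
    StrictConvexOn ℝ s (fun w => f w * g w) := by
  refine ⟨hf.1, fun u hu v hv huv a b ha hb hab => ?_⟩
  have hm : a • u + b • v ∈ s := hf.1 hu hv ha.le hb.le hab
  have h1 : f (a • u + b • v) ≤ a * f u + b * f v := hf.2 hu hv ha.le hb.le hab
  have h2 : g (a • u + b • v) ≤ a * g u + b * g v := hg.2 hu hv ha.le hb.le hab
  have hkey : 0 < (f u - f v) * (g u - g v) := by
    rcases lt_or_gt_of_ne huv with h | h
    · have h1' := hfm hu hv h
      have h2' := hgm hu hv h
      nlinarith
    · have h1' := hfm hv hu h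
      have h2' := hgm hv hu h
      nlinarith
  simp only [smul_eq_mul]
  have step1 : f (a • u + b • v) * g (a • u + b • v)
      ≤ (a * f u + b * f v) * (a * g u + b * g v) := by
    apply mul_le_mul h1 h2 (hg0 _ hm).le
    nlinarith [hf0 u hu, hf0 v hv]
  have id1 : a * (f u * g u) + b * (f v * g v) - (a * f u + b * f v) * (a * g u + b * g v)
      = a * b * ((f u - f v) * (g u - g v)) := by
    linear_combination (-(a * (f u * g u) + b * (f v * g v))) * hab
  have step2 : (a * f u + b * f v) * (a * g u + b * g v)
      < a * (f u * g u) + b * (f v * g v) := by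
    linarith [mul_pos (mul_pos ha hb) hkey]
  simp only [smul_eq_mul] at step1
  calc (fun w => f w * g w) (a * u + b * v) ≤ _ := step1
    _ < _ := step2

lemma strictConvexOn_inv_sub {b my x : ℝ} (hbx : x ≤ b) :
    StrictConvexOn ℝ (Set.Ioo my x) (fun w => (b - w)⁻¹) := by
  refine ⟨convex_Ioo _ _, fun u hu v hv huv a aa ha haa hab => ?_⟩
  obtain rfl : aa = 1 - a := by linarith
  have hp : 0 < b - u := by have := hu.2; linarith
  have hq : 0 < b - v := by have := hv.2; linarith
  simp only [smul_eq_mul]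
  have hbm : b - (a * u + (1 - a) * v) = a * (b - u) + (1 - a) * (b - v) := by ring
  rw [hbm, ← sub_pos]
  have hd : 0 < a * (b - u) + (1 - a) * (b - v) := by positivity
  have e : a * (b - u)⁻¹ + (1 - a) * (b - v)⁻¹ - (a * (b - u) + (1 - a) * (b - v))⁻¹
      = (a * (1 - a) * ((b - u) - (b - v)) ^ 2) / ((b - u) * (b - v) * (a * (b - u) + (1 - a) * (b - v))) := by
    field_simp
    ring
  rw [e]
  have hne : (b - u) - (b - v) ≠ 0 := by intro h; apply huv; linarith [sub_eq_zero.mp h]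
  have hnum : 0 < a * (1 - a) * ((b - u) - (b - v)) ^ 2 := by positivity
  positivity

lemma prod_inv_convex (y x : ℝ) (b : ℕ → ℝ) (hb : ∀ i, x < b i) :
    ∀ n : ℕ,
      (∀ w ∈ Set.Ioo (-y) x, 0 < (y + w) * ∏ i ∈ Finset.range n, (b i - w)⁻¹) ∧
      StrictMonoOn (fun w => (y + w) * ∏ i ∈ Finset.range n, (b i - w)⁻¹) (Set.Ioo (-y) x) ∧
      ConvexOn ℝ (Set.Ioo (-y) x) (fun w => (y + w) * ∏ i ∈ Finset.range n, (b i - w)⁻¹)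
  | 0 => by
      refine ⟨fun w hw => by simpa using by linarith [hw.1], ?_, ?_⟩
      · intro u hu v hv huv; simpa using huv
      · refine ⟨convex_Ioo _ _, fun u hu v hv a aa ha haa hab => le_of_eq ?_⟩
        simp only [Finset.range_zero, Finset.prod_empty, mul_one, smul_eq_mul]
        linear_combination y * hab.symm
  | (n + 1) => by
      obtain ⟨hpos, hmono, hconv⟩ := prod_inv_convex y x b hb n
      have hfac_pos : ∀ w ∈ Set.Ioo (-y) x, 0 < (b n - w)⁻¹ := fun w hw =>
        inv_pos.2 (by linarith [hw.2, hb n])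
      have hfac_mono : StrictMonoOn (fun w => (b n - w)⁻¹) (Set.Ioo (-y) x) := by
        intro u hu v hv huv
        have h1 : 0 < b n - v := by linarith [hv.2, hb n]
        exact inv_strictAnti₀ h1 (by linarith)
      have hfac_conv : ConvexOn ℝ (Set.Ioo (-y) x) (fun w => (b n - w)⁻¹) :=
        (strictConvexOn_inv_sub (hb n).le).convexOn
      have hsc : StrictConvexOn ℝ (Set.Ioo (-y) x)
          (fun w => ((y + w) * ∏ i ∈ Finset.range n, (b i - w)⁻¹) * (b n - w)⁻¹) :=
        strictConvexOn_mul_aux hconv hfac_conv hmono hfac_mono hpos hfac_pos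
      have heq : (fun w => (y + w) * ∏ i ∈ Finset.range (n + 1), (b i - w)⁻¹)
          = (fun w => ((y + w) * ∏ i ∈ Finset.range n, (b i - w)⁻¹) * (b n - w)⁻¹) := by
        funext w; rw [Finset.prod_range_succ]; ring
      refine ⟨?_, ?_, ?_⟩
      · intro w hw
        rw [congrFun heq w]; exact mul_pos (hpos w hw) (hfac_pos w hw)
      · rw [heq]
        intro u hu v hv huv
        exact mul_lt_mul'' (hmono hu hv huv) (hfac_mono hu hv huv)
          (hpos u hu).le (hfac_pos u hu).le
      · rw [heq]; exact hsc.convexOn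

lemma prod_inv_strictConvex (y x : ℝ) (b : ℕ → ℝ) (hb : ∀ i, x < b i) (n : ℕ) :
    StrictConvexOn ℝ (Set.Ioo (-y) x)
      (fun w => (y + w) * ∏ i ∈ Finset.range (n + 1), (b i - w)⁻¹) := by
  obtain ⟨hpos, hmono, hconv⟩ := prod_inv_convex y x b hb n
  have hfac_pos : ∀ w ∈ Set.Ioo (-y) x, 0 < (b n - w)⁻¹ := fun w hw =>
    inv_pos.2 (by linarith [hw.2, hb n])
  have hfac_mono : StrictMonoOn (fun w => (b n - w)⁻¹) (Set.Ioo (-y) x) := by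
    intro u hu v hv huv
    have h1 : 0 < b n - v := by linarith [hv.2, hb n]
    exact inv_strictAnti₀ h1 (by linarith)
  have hfac_conv : ConvexOn ℝ (Set.Ioo (-y) x) (fun w => (b n - w)⁻¹) :=
    (strictConvexOn_inv_sub (hb n).le).convexOn
  have hsc := strictConvexOn_mul_aux hconv hfac_conv hmono hfac_mono hpos hfac_pos
  have heq : (fun w => (y + w) * ∏ i ∈ Finset.range (n + 1), (b i - w)⁻¹)
      = (fun w => ((y + w) * ∏ i ∈ Finset.range n, (b i - w)⁻¹) * (b n - w)⁻¹) := by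
    funext w; rw [Finset.prod_range_succ]; ring
  rw [heq]; exact hsc

/-- The function `w ↦ q_k(x - w; y + w; z₁, …, z_k)` is strictly concave on the
open interval `-y < w < x`. -/
theorem icmQ_strictConcaveOn (k : ℕ) (x y : ℝ) (z : Fin k → ℝ)
    (hx : 0 < x) (hy : 0 < y) (hz : ∀ i, 0 < z i)
    (hsum : x + y + ∑ i, z i < 1) :
    StrictConcaveOn ℝ (Set.Ioo (-y) x)
      (fun w => icmQ (x - w) (y + w) (List.ofFn z)) := by
  set zs := List.ofFn z with hzs
  have hlen : zs.length = k := by simp [hzs]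
  have hsz : zs.sum = ∑ i, z i := by rw [hzs, List.sum_ofFn]
  have hposz : ∀ v ∈ zs, 0 < v := by
    intro v hv
    rw [hzs, List.mem_ofFn] at hv
    obtain ⟨i, rfl⟩ := hv
    exact hz i
  have hZ : 0 < zs.prod := List.prod_pos hposz
  have hSle : ∀ i, (zs.take i).sum ≤ ∑ i, z i := fun i => by
    rw [← hsz]; exact take_sum_le hposz i
  set d : ℕ → ℝ := fun i => 1 - x - y - (zs.take i).sum with hd
  set bb : ℕ → ℝ := fun i => 1 - y - (zs.take i).sum with hbb
  have hdpos : ∀ i, 0 < d i := fun i => by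
    have := hSle i; simp only [hd]; linarith
  have hbx : ∀ i, x < bb i := fun i => by
    have := hdpos i; simp only [hd] at this; simp only [hbb]; linarith
  set F := ∏ i ∈ Finset.range (k + 1), d i with hF
  set G := ∏ i ∈ Finset.range k, d i with hG
  have hFpos : 0 < F := Finset.prod_pos fun i _ => hdpos i
  have hGpos : 0 < G := Finset.prod_pos fun i _ => hdpos i
  have haff : ConcaveOn ℝ (Set.Ioo (-y) x) (fun w => zs.prod / G * (y + w)) := by
    refine ⟨convex_Ioo _ _, fun u hu v hv a aa ha haa hab => le_of_eq ?_⟩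
    simp only [smul_eq_mul]
    linear_combination (zs.prod / G * y) * hab
  have hsc := prod_inv_strictConvex y x bb hbx k
  have hC : 0 < zs.prod * F / G := by positivity
  have hneg : StrictConcaveOn ℝ (Set.Ioo (-y) x)
      (fun w => -(zs.prod * F / G) *
        ((y + w) * ∏ i ∈ Finset.range (k + 1), (bb i - w)⁻¹)) := by
    refine ⟨hsc.1, fun u hu v hv huv a aa ha haa hab => ?_⟩
    have h := hsc.2 hu hv huv ha haa hab
    simp only [smul_eq_mul] at h ⊢
    have h2 := mul_lt_mul_of_pos_left h hC
    nlinarith [h2]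
  have hcomb := haff.add_strictConcaveOn hneg
  refine hcomb.congr ?_
  intro w hw
  obtain ⟨hw1, hw2⟩ := hw
  have hx' : 0 < x - w := by linarith
  have hyw : 0 < y + w := by linarith
  have hcond : 0 < (1 - (y + w)) - (x - w) - zs.sum := by rw [hsz]; linarith
  have hmain := auxQ_eq (x - w) hx' zs (1 - (y + w)) hposz hcond
  have hEE : (∏ i ∈ Finset.range (zs.length + 1), ((1 - (y + w)) - (zs.take i).sum))
      = ∏ i ∈ Finset.range (k + 1), (bb i - w) := by
    rw [hlen]; exact Finset.prod_congr rfl fun i _ => by simp only [hbb]; ring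
  have hFF : (∏ i ∈ Finset.range (zs.length + 1), ((1 - (y + w)) - (x - w) - (zs.take i).sum))
      = F := by
    rw [hlen, hF]; exact Finset.prod_congr rfl fun i _ => by simp only [hd]; ring
  have hGG : (∏ i ∈ Finset.range zs.length, ((1 - (y + w)) - (x - w) - (zs.take i).sum))
      = G := by
    rw [hlen, hG]; exact Finset.prod_congr rfl fun i _ => by simp only [hd]; ring
  rw [hEE, hFF, hGG] at hmain
  have hEpos : 0 < ∏ i ∈ Finset.range (k + 1), (bb i - w) :=
    Finset.prod_pos fun i _ => by have := hbx i; linarith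
  show zs.prod / G * (y + w) + -(zs.prod * F / G) *
      ((y + w) * ∏ i ∈ Finset.range (k + 1), (bb i - w)⁻¹)
    = icmQ (x - w) (y + w) zs
  rw [icmQ_eq_auxQ, show (1 : ℝ) - (y + w) = 1 - (y + w) from rfl, hmain,
    Finset.prod_inv_distrib]
  field_simp
  ring
end

section
/- Fix an integer k ≥ 0 and real numbers x, y, z₁, …, z_k > 0 with x + y + z₁ + ⋯ + z_k < 1. Let W be a real random variable taking only finitely many values, with E[W] = 0, P(W = 0) < 1, and −y < W < x almost surely. Then E[q_k(x − W; y + W; z₁, …, z_k)] < q_k(x; y; z₁, …, z_k). -/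
open MeasureTheory
open scoped ProbabilityTheory

namespace IcmAux


lemma strictConvexOn_congr {s : Set ℝ} {f g : ℝ → ℝ} (hf : StrictConvexOn ℝ s f)
    (h : ∀ w ∈ s, f w = g w) : StrictConvexOn ℝ s g := by
  refine ⟨hf.1, fun p hp q hq hpq t u ht hu htu => ?_⟩
  rw [← h _ hp, ← h _ hq, ← h _ (hf.1 hp hq ht.le hu.le htu)]
  exact hf.2 hp hq hpq ht hu htu

lemma strictConvexOn_inv_affine {s : Set ℝ} (hs : Convex ℝ s) {a : ℝ}
    (h : ∀ w ∈ s, w < a) : StrictConvexOn ℝ s (fun w => (a - w)⁻¹) := by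
  refine ⟨hs, fun p hp q hq hpq t u ht hu htu => ?_⟩
  have hu1 : u = 1 - t := by linarith
  subst hu1
  have hP : 0 < a - p := sub_pos.2 (h p hp)
  have hQ : 0 < a - q := sub_pos.2 (h q hq)
  simp only [smul_eq_mul]
  have hM : a - (t * p + (1 - t) * q) = t * (a - p) + (1 - t) * (a - q) := by ring
  have hMpos : 0 < t * (a - p) + (1 - t) * (a - q) := by positivity
  have hPQ : (a - p) - (a - q) ≠ 0 := by
    intro hc; exact hpq (by linarith [sub_eq_zero.1 hc])
  have hsq : 0 < ((a - p) - (a - q)) ^ 2 :=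
    lt_of_le_of_ne (sq_nonneg _) (Ne.symm (pow_ne_zero 2 hPQ))
  have key : t * (a - p)⁻¹ + (1 - t) * (a - q)⁻¹ - (t * (a - p) + (1 - t) * (a - q))⁻¹
      = t * (1 - t) * ((a - p) - (a - q)) ^ 2 /
        ((a - p) * (a - q) * (t * (a - p) + (1 - t) * (a - q))) := by
    field_simp
    ring
  have hpos2 : 0 < t * (1 - t) * ((a - p) - (a - q)) ^ 2 /
      ((a - p) * (a - q) * (t * (a - p) + (1 - t) * (a - q))) :=
    div_pos (mul_pos (mul_pos ht hu) hsq) (mul_pos (mul_pos hP hQ) hMpos)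
  calc (a - (t * p + (1 - t) * q))⁻¹ = (t * (a - p) + (1 - t) * (a - q))⁻¹ := by rw [hM]
    _ < t * (a - p)⁻¹ + (1 - t) * (a - q)⁻¹ := by linarith

lemma monotoneOn_mul_aux {s : Set ℝ} {f g : ℝ → ℝ} (hf : MonotoneOn f s) (hg : MonotoneOn g s)
    (hf0 : ∀ w ∈ s, 0 ≤ f w) (hg0 : ∀ w ∈ s, 0 ≤ g w) :
    MonotoneOn (fun w => f w * g w) s := by
  intro p hp q hq h
  have h1 := hf hp hq h
  have h2 := hg hp hq h
  have := hf0 p hp; have := hg0 p hp; have := hf0 q hq; have := hg0 q hq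
  dsimp only
  nlinarith

lemma strictConvexOn_mul_aux {s : Set ℝ} {f g : ℝ → ℝ}
    (hf : StrictConvexOn ℝ s f) (hg : ConvexOn ℝ s g)
    (hf0 : ∀ w ∈ s, 0 < f w) (hg0 : ∀ w ∈ s, 0 < g w)
    (hfm : MonotoneOn f s) (hgm : MonotoneOn g s) :
    StrictConvexOn ℝ s (fun w => f w * g w) := by
  refine ⟨hf.1, fun p hp q hq hpq t u ht hu htu => ?_⟩
  have hmem : t • p + u • q ∈ s := hf.1 hp hq ht.le hu.le htu
  have h1 : f (t • p + u • q) < t * f p + u * f q := by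
    simpa [smul_eq_mul] using hf.2 hp hq hpq ht hu htu
  have h2 : g (t • p + u • q) ≤ t * g p + u * g q := by
    simpa [smul_eq_mul] using hg.2 hp hq ht.le hu.le htu
  have hfp := hf0 p hp
  have hfq := hf0 q hq
  have hgp := hg0 p hp
  have hgq := hg0 q hq
  have hgm0 := hg0 _ hmem
  have hfm0 := hf0 _ hmem
  have hmono : 0 ≤ (f p - f q) * (g p - g q) := by
    rcases le_total p q with h | h
    · nlinarith [hfm hp hq h, hgm hp hq h]
    · nlinarith [hfm hq hp h, hgm hq hp h]
  have hu1 : u = 1 - t := by linarith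
  subst hu1
  simp only [smul_eq_mul] at h1 h2 hgm0 hfm0 ⊢
  have hA : 0 < t * f p + (1 - t) * f q := by nlinarith
  calc f (t * p + (1 - t) * q) * g (t * p + (1 - t) * q)
      < (t * f p + (1 - t) * f q) * g (t * p + (1 - t) * q) :=
        mul_lt_mul_of_pos_right h1 hgm0
    _ ≤ (t * f p + (1 - t) * f q) * (t * g p + (1 - t) * g q) :=
        mul_le_mul_of_nonneg_left h2 hA.le
    _ ≤ t * (f p * g p) + (1 - t) * (f q * g q) := by nlinarith [mul_nonneg (mul_nonneg ht.le hu.le) hmono]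

lemma prod_inv_aux {s : Set ℝ} (hs : Convex ℝ s) (a : ℕ → ℝ) :
    ∀ n : ℕ, (∀ j, j < n → ∀ w ∈ s, w < a j) →
      ConvexOn ℝ s (fun w => ∏ j ∈ Finset.range n, (a j - w)⁻¹) ∧
      (∀ w ∈ s, 0 < ∏ j ∈ Finset.range n, (a j - w)⁻¹) ∧
      MonotoneOn (fun w => ∏ j ∈ Finset.range n, (a j - w)⁻¹) s := by
  intro n
  induction n with
  | zero =>
    intro _
    simp only [Finset.range_zero, Finset.prod_empty]
    exact ⟨convexOn_const 1 hs, fun w _ => one_pos, monotoneOn_const⟩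
  | succ n ih =>
    intro h
    obtain ⟨hc, hpos, hmono⟩ := ih (fun j hj => h j (Nat.lt_succ_of_lt hj))
    have hlt : ∀ w ∈ s, w < a n := h n (Nat.lt_succ_self n)
    have hinv_c : ConvexOn ℝ s (fun w => (a n - w)⁻¹) :=
      (strictConvexOn_inv_affine hs hlt).convexOn
    have hinv_pos : ∀ w ∈ s, 0 < (a n - w)⁻¹ := fun w hw => inv_pos.2 (sub_pos.2 (hlt w hw))
    have hinv_mono : MonotoneOn (fun w => (a n - w)⁻¹) s := by
      intro p hp q hq hpq
      have h1 : 0 < a n - q := sub_pos.2 (hlt q hq)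
      have h2 : a n - q ≤ a n - p := by linarith
      dsimp only
      exact inv_anti₀ h1 h2
    simp only [Finset.prod_range_succ]
    refine ⟨?_, fun w hw => mul_pos (hpos w hw) (hinv_pos w hw),
      monotoneOn_mul_aux hmono hinv_mono (fun w hw => (hpos w hw).le)
        (fun w hw => (hinv_pos w hw).le)⟩
    have := hc.mul hinv_c (fun w hw => (hpos w hw).le) (fun w hw => (hinv_pos w hw).le)
      (hmono.monovaryOn hinv_mono)
    simpa [Pi.mul_def] using this


lemma strictConvexOn_smul_aux {s : Set ℝ} {f : ℝ → ℝ} {c : ℝ} (hc : 0 < c)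
    (hf : StrictConvexOn ℝ s f) : StrictConvexOn ℝ s (fun w => c * f w) := by
  refine ⟨hf.1, fun p hp q hq hpq t u ht hu htu => ?_⟩
  have h := hf.2 hp hq hpq ht hu htu
  simp only [smul_eq_mul] at h ⊢
  nlinarith

lemma strictConvexOn_sub_const {s : Set ℝ} {f : ℝ → ℝ} (c : ℝ)
    (hf : StrictConvexOn ℝ s f) : StrictConvexOn ℝ s (fun w => f w - c) := by
  refine ⟨hf.1, fun p hp q hq hpq t u ht hu htu => ?_⟩
  have h := hf.2 hp hq hpq ht hu htu
  have hu1 : u = 1 - t := by linarith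
  subst hu1
  simp only [smul_eq_mul] at h ⊢
  nlinarith

lemma strictConvexOn_H {s : Set ℝ} (hs : Convex ℝ s) (y : ℝ) (n : ℕ) (a : ℕ → ℝ)
    (hposy : ∀ w ∈ s, 0 < y + w)
    (hlt : ∀ j, j < n + 1 → ∀ w ∈ s, w < a j)
    (h0 : 0 < y + a 0) :
    StrictConvexOn ℝ s (fun w => (y + w) * ∏ j ∈ Finset.range (n + 1), (a j - w)⁻¹) := by
  have hlt0 : ∀ w ∈ s, w < a 0 := hlt 0 (Nat.succ_pos n)
  -- first factor
  have hf : StrictConvexOn ℝ s (fun w => (y + a 0) * (a 0 - w)⁻¹ - 1) :=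
    strictConvexOn_sub_const 1 (strictConvexOn_smul_aux h0 (strictConvexOn_inv_affine hs hlt0))
  have hfval : ∀ w ∈ s, (y + a 0) * (a 0 - w)⁻¹ - 1 = (y + w) * (a 0 - w)⁻¹ := by
    intro w hw
    have hne : a 0 - w ≠ 0 := ne_of_gt (sub_pos.2 (hlt0 w hw))
    field_simp
    ring
  have hf0 : ∀ w ∈ s, 0 < (y + a 0) * (a 0 - w)⁻¹ - 1 := by
    intro w hw
    rw [hfval w hw]
    exact mul_pos (hposy w hw) (inv_pos.2 (sub_pos.2 (hlt0 w hw)))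
  have hfm : MonotoneOn (fun w => (y + a 0) * (a 0 - w)⁻¹ - 1) s := by
    intro p hp q hq hpq
    have h1 : 0 < a 0 - q := sub_pos.2 (hlt0 q hq)
    have h2 : a 0 - q ≤ a 0 - p := by linarith
    have := inv_anti₀ h1 h2
    dsimp only
    nlinarith
  -- remaining factors
  obtain ⟨hc, hpos, hmono⟩ := prod_inv_aux hs (fun j => a (j + 1)) n
    (fun j hj w hw => hlt (j + 1) (by omega) w hw)
  have hmul := strictConvexOn_mul_aux hf hc hf0 hpos hfm hmono
  refine strictConvexOn_congr hmul ?_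
  intro w hw
  rw [Finset.prod_range_succ']
  rw [hfval w hw]
  ring

lemma strictConcaveOn_combo {s : Set ℝ} {H : ℝ → ℝ} (A B C : ℝ) (hC : 0 < C)
    (hH : StrictConvexOn ℝ s H) :
    StrictConcaveOn ℝ s (fun w => A * w + B - C * H w) := by
  refine ⟨hH.1, fun p hp q hq hpq t u ht hu htu => ?_⟩
  have h := hH.2 hp hq hpq ht hu htu
  have hu1 : u = 1 - t := by linarith
  subst hu1
  simp only [smul_eq_mul] at h ⊢
  nlinarith [mul_lt_mul_of_pos_left h hC]



lemma icmP_insert (x y : ℝ) (l : List ℝ) (i : ℕ) (hi : i ≤ l.length) :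
    icmP (y :: (l.take i ++ x :: l.drop i)) =
      x * y * l.prod /
        ((∏ j ∈ Finset.range (i + 1), (1 - y - (l.take j).sum)) *
          ∏ j ∈ Finset.Ico i l.length, (1 - x - y - (l.take j).sum)) := by
  unfold icmP
  have hlen : (y :: (l.take i ++ x :: l.drop i)).length = l.length + 2 := by
    simp only [List.length_cons, List.length_append, List.length_take, List.length_drop]
    omega
  have hprod : (y :: (l.take i ++ x :: l.drop i)).prod = x * y * l.prod := by
    rw [List.prod_cons, List.prod_append, List.prod_cons]
    rw [show (l.take i).prod * (x * (l.drop i).prod) = x * ((l.take i ++ l.drop i).prod) by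
      rw [List.prod_append]; ring]
    rw [List.take_append_drop]
    ring
  have hterm : ∀ m : ℕ,
      1 - (((y :: (l.take i ++ x :: l.drop i))).take (m + 1)).sum
        = if m ≤ i then 1 - y - (l.take m).sum else 1 - x - y - (l.take (m - 1)).sum := by
    intro m
    rw [List.take_succ_cons, List.sum_cons]
    by_cases hmi : m ≤ i
    · rw [if_pos hmi]
      rw [List.take_append]
      have h0 : m - (l.take i).length = 0 := by
        simp only [List.length_take]; omega
      rw [h0, List.take_zero, List.append_nil, List.take_take]
      have : min m i = m := by omega
      rw [this]; ring
    · rw [if_neg hmi]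
      push_neg at hmi
      rw [List.take_append, List.take_take]
      have h2 : min m i = i := by omega
      have h3 : m - (l.take i).length = m - i := by
        simp only [List.length_take]; omega
      rw [h2, h3]
      have h4 : m - i = (m - i - 1) + 1 := by omega
      rw [h4, List.take_succ_cons, List.sum_append, List.sum_cons]
      have h5 : (l.take (m - 1)).sum = (l.take i).sum + ((l.drop i).take (m - i - 1)).sum := by
        rw [show m - 1 = i + (m - i - 1) by omega, List.take_add, List.sum_append]
      linarith
  have hsplit : ∏ m ∈ Finset.range (l.length + 1),
        (1 - ((y :: (l.take i ++ x :: l.drop i)).take (m + 1)).sum)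
      = (∏ j ∈ Finset.range (i + 1), (1 - y - (l.take j).sum)) *
          ∏ j ∈ Finset.Ico i l.length, (1 - x - y - (l.take j).sum) := by
    have hk1 : l.length + 1 = (i + 1) + (l.length - i) := by omega
    rw [hk1, Finset.prod_range_add]
    congr 1
    · refine Finset.prod_congr rfl fun m hm => ?_
      have hm' := Finset.mem_range.1 hm
      rw [hterm m, if_pos (by omega)]
    · rw [Finset.prod_Ico_eq_prod_range]
      have : l.length - i = l.length - i := rfl
      refine Finset.prod_congr rfl fun j hj => ?_
      rw [hterm (i + 1 + j), if_neg (by omega)]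
      have : i + 1 + j - 1 = i + j := by omega
      rw [this]
  rw [hlen, hprod]
  have h21 : l.length + 2 - 1 = l.length + 1 := rfl
  rw [h21, hsplit]


lemma icmQ_formula (x y : ℝ) (l : List ℝ) (hx : x ≠ 0)
    (hu : ∀ j, j ≤ l.length → 1 - y - (l.take j).sum ≠ 0)
    (hv : ∀ j, j < l.length → 1 - x - y - (l.take j).sum ≠ 0) :
    icmQ x y l = l.prod * y *
      ((∏ j ∈ Finset.range l.length, (1 - x - y - (l.take j).sum)⁻¹) -
        (1 - x - y - l.sum) * ∏ j ∈ Finset.range (l.length + 1), (1 - y - (l.take j).sum)⁻¹) := by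
  set F : ℕ → ℝ := fun i =>
    if i ≤ l.length then
      (∏ j ∈ Finset.range i, (1 - y - (l.take j).sum))⁻¹ *
        (∏ j ∈ Finset.Ico i l.length, (1 - x - y - (l.take j).sum))⁻¹
    else (1 - x - y - l.sum) * (∏ j ∈ Finset.range (l.length + 1), (1 - y - (l.take j).sum))⁻¹
    with hF
  have hUne : ∀ n, n ≤ l.length + 1 → (∏ j ∈ Finset.range n, (1 - y - (l.take j).sum)) ≠ 0 := by
    intro n hn
    refine Finset.prod_ne_zero_iff.2 fun j hj => hu j ?_
    have := Finset.mem_range.1 hj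
    omega
  have hVne : ∀ i, (∏ j ∈ Finset.Ico i l.length, (1 - x - y - (l.take j).sum)) ≠ 0 := by
    intro i
    exact Finset.prod_ne_zero_iff.2 fun j hj => hv j (Finset.mem_Ico.1 hj).2
  have hstep : ∀ i ∈ Finset.range (l.length + 1),
      icmP (y :: (l.take i ++ x :: l.drop i)) = l.prod * y * (F i - F (i + 1)) := by
    intro i hi
    have hik : i ≤ l.length := by
      have := Finset.mem_range.1 hi; omega
    rw [icmP_insert x y l i hik]
    by_cases hik' : i < l.length
    · simp only [hF]
      rw [if_pos hik, if_pos (by omega : i + 1 ≤ l.length)]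
      rw [Finset.prod_range_succ, Finset.prod_eq_prod_Ico_succ_bot hik']
      have hA := hUne i (by omega)
      have hB := hVne (i + 1)
      have hui := hu i (by omega)
      have hvi := hv i hik'
      field_simp
      ring
    · have hik2 : i = l.length := by omega
      subst hik2
      simp only [hF]
      rw [if_pos le_rfl, if_neg (by omega), Finset.Ico_self, Finset.prod_empty,
        Finset.prod_range_succ]
      have hA := hUne l.length (by omega)
      have hui := hu l.length le_rfl
      rw [List.take_length] at hui ⊢
      field_simp
      ring
  unfold icmQ
  rw [Finset.sum_congr rfl hstep, ← Finset.mul_sum, Finset.sum_range_sub']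
  have hF0 : F 0 = ∏ j ∈ Finset.range l.length, (1 - x - y - (l.take j).sum)⁻¹ := by
    simp only [hF]
    rw [if_pos (Nat.zero_le _), Finset.range_zero, Finset.prod_empty, inv_one, one_mul,
      ← Finset.range_eq_Ico, ← Finset.prod_inv_distrib]
  have hFk : F (l.length + 1)
      = (1 - x - y - l.sum) * ∏ j ∈ Finset.range (l.length + 1), (1 - y - (l.take j).sum)⁻¹ := by
    simp only [hF]
    rw [if_neg (by omega), ← Finset.prod_inv_distrib]
  rw [hF0, hFk]


lemma main_concave_form (x y : ℝ) (L : List ℝ) (hx : 0 < x) (hy : 0 < y)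
    (hL : ∀ r ∈ L, 0 < r) (hsum : x + y + L.sum < 1) :
    ∃ g : ℝ → ℝ, (∀ w ∈ Set.Ioo (-y) x, icmQ (x - w) (y + w) L = g w) ∧
      StrictConcaveOn ℝ (Set.Ioo (-y) x) g ∧ ContinuousOn g (Set.Ioo (-y) x) ∧ Measurable g := by
  have hZnonneg : ∀ j : ℕ, 0 ≤ (L.take j).sum := fun j =>
    List.sum_nonneg fun r hr => (hL r (List.take_subset j L hr)).le
  have hZle : ∀ j : ℕ, (L.take j).sum ≤ L.sum := by
    intro j
    conv_rhs => rw [← List.take_append_drop j L]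
    rw [List.sum_append]
    have : 0 ≤ (L.drop j).sum := List.sum_nonneg fun r hr => (hL r (List.drop_subset j L hr)).le
    linarith
  have hprodL : 0 < L.prod := List.prod_pos hL
  have hCpos : 0 < 1 - x - y - L.sum := by linarith
  have hxa : ∀ j : ℕ, x < 1 - y - (L.take j).sum := fun j => by
    have := hZle j; linarith
  refine ⟨fun w => L.prod * (y + w) *
      ((∏ j ∈ Finset.range L.length, (1 - x - y - (L.take j).sum)⁻¹) -
        (1 - x - y - L.sum) *
          ∏ j ∈ Finset.range (L.length + 1), ((1 - y - (L.take j).sum) - w)⁻¹),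
    ?_, ?_, ?_, ?_⟩
  · intro w hw
    obtain ⟨hw1, hw2⟩ := hw
    rw [icmQ_formula (x - w) (y + w) L
      (by intro h; rw [sub_eq_zero] at h; linarith)
      (fun j _ => by have := hxa j; exact ne_of_gt (by linarith))
      (fun j _ => by have := hZle j; exact ne_of_gt (by linarith))]
    have e1 : ∀ j : ℕ, 1 - (x - w) - (y + w) - (L.take j).sum
        = 1 - x - y - (L.take j).sum := fun j => by ring
    have e2 : ∀ j : ℕ, 1 - (y + w) - (L.take j).sum
        = (1 - y - (L.take j).sum) - w := fun j => by ring
    have e3 : 1 - (x - w) - (y + w) - L.sum = 1 - x - y - L.sum := by ring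
    simp only [e1, e2, e3]
  · have hH : StrictConvexOn ℝ (Set.Ioo (-y) x)
        (fun w => (y + w) * ∏ j ∈ Finset.range (L.length + 1),
          ((1 - y - (L.take j).sum) - w)⁻¹) :=
      strictConvexOn_H (convex_Ioo (-y) x) y L.length (fun j => 1 - y - (L.take j).sum)
        (fun w hw => by have := hw.1; linarith)
        (fun j _ w hw => lt_trans hw.2 (hxa j))
        (by simp only [List.take_zero, List.sum_nil]; linarith)
    have hcombo : StrictConcaveOn ℝ (Set.Ioo (-y) x)
        (fun w => (L.prod * ∏ j ∈ Finset.range L.length, (1 - x - y - (L.take j).sum)⁻¹) * w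
          + (L.prod * ∏ j ∈ Finset.range L.length, (1 - x - y - (L.take j).sum)⁻¹) * y
          - (L.prod * (1 - x - y - L.sum)) *
            ((y + w) * ∏ j ∈ Finset.range (L.length + 1),
              ((1 - y - (L.take j).sum) - w)⁻¹)) :=
      strictConcaveOn_combo _ _ _ (mul_pos hprodL hCpos) hH
    have hfun : (fun w => L.prod * (y + w) *
        ((∏ j ∈ Finset.range L.length, (1 - x - y - (L.take j).sum)⁻¹) -
          (1 - x - y - L.sum) *
            ∏ j ∈ Finset.range (L.length + 1), ((1 - y - (L.take j).sum) - w)⁻¹))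
        = (fun w => (L.prod * ∏ j ∈ Finset.range L.length, (1 - x - y - (L.take j).sum)⁻¹) * w
          + (L.prod * ∏ j ∈ Finset.range L.length, (1 - x - y - (L.take j).sum)⁻¹) * y
          - (L.prod * (1 - x - y - L.sum)) *
            ((y + w) * ∏ j ∈ Finset.range (L.length + 1),
              ((1 - y - (L.take j).sum) - w)⁻¹)) := funext fun w => by ring
    rw [hfun]
    exact hcombo
  · have hP : ContinuousOn
        (fun w => ∏ j ∈ Finset.range (L.length + 1), ((1 - y - (L.take j).sum) - w)⁻¹)
        (Set.Ioo (-y) x) := by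
      refine continuousOn_finset_prod _ fun j _ => ?_
      refine ContinuousOn.inv₀ (continuousOn_const.sub continuousOn_id) fun w hw => ?_
      have := hxa j
      have := hw.2
      exact ne_of_gt (by simp only [Set.mem_Ioo] at hw; linarith [hw.2])
    exact (continuousOn_const.mul (continuousOn_const.add continuousOn_id)).mul
      (continuousOn_const.sub (continuousOn_const.mul hP))
  · have hP : Measurable
        (fun w : ℝ => ∏ j ∈ Finset.range (L.length + 1), ((1 - y - (L.take j).sum) - w)⁻¹) := by
      refine Finset.measurable_prod _ fun j _ => ?_
      exact (measurable_const.sub measurable_id).inv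
    exact (measurable_const.mul (measurable_const.add measurable_id)).mul
      (measurable_const.sub (measurable_const.mul hP))

end IcmAux

/-- A fair bet `W` between the player with fraction `x` and the player with
fraction `y` strictly lowers the expected value of `q_k`. -/
theorem expected_icmQ_lt_of_fair_bet
    {Ω : Type*} [MeasureSpace Ω] [IsProbabilityMeasure (ℙ : Measure Ω)]
    (k : ℕ) (x y : ℝ) (z : Fin k → ℝ)
    (hx : 0 < x) (hy : 0 < y) (hz : ∀ i, 0 < z i)
    (hsum : x + y + ∑ i, z i < 1)
    (W : Ω → ℝ) (hWmeas : Measurable W) (hWfin : (Set.range W).Finite)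
    (hWmean : ∫ ω, W ω = 0)
    (hWne : ℙ {ω | W ω = 0} < 1)
    (hWbound : ∀ᵐ ω ∂ℙ, -y < W ω ∧ W ω < x) :
    ∫ ω, icmQ (x - W ω) (y + W ω) (List.ofFn z)
      < icmQ x y (List.ofFn z) := by
  classical
  set L : List ℝ := List.ofFn z with hLdef
  have hmemL : ∀ r ∈ L, 0 < r := by
    intro r hr
    rw [hLdef, List.mem_ofFn] at hr
    obtain ⟨i, rfl⟩ := hr
    exact hz i
  have hsumL : L.sum = ∑ i, z i := by rw [hLdef]; exact List.sum_ofFn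
  obtain ⟨g, hform, hconc, hcont, hgmeas⟩ :=
    IcmAux.main_concave_form x y L hx hy hmemL (by rw [hsumL]; exact hsum)
  set V : Finset ℝ := insert (0:ℝ) (hWfin.toFinset.filter (fun v => -y < v ∧ v < x)) with hV
  have hVne : (0:ℝ) ∈ V := Finset.mem_insert_self _ _
  have hVnonempty : V.Nonempty := ⟨0, hVne⟩
  set m := V.min' hVnonempty with hm
  set M := V.max' hVnonempty with hM
  have hmem_bounds : ∀ v ∈ V, -y < v ∧ v < x := by
    intro v hv
    rw [hV, Finset.mem_insert] at hv
    rcases hv with rfl | hv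
    · exact ⟨by linarith, hx⟩
    · exact (Finset.mem_filter.1 hv).2
  have hmy : -y < m := (hmem_bounds m (V.min'_mem hVnonempty)).1
  have hMx : M < x := (hmem_bounds M (V.max'_mem hVnonempty)).2
  have hsub : Set.Icc m M ⊆ Set.Ioo (-y) x := fun w hw =>
    ⟨lt_of_lt_of_le hmy hw.1, lt_of_le_of_lt hw.2 hMx⟩
  have hae : ∀ᵐ ω ∂ℙ, W ω ∈ Set.Icc m M := by
    filter_upwards [hWbound] with ω h
    have hWV : W ω ∈ V := by
      rw [hV]
      exact Finset.mem_insert_of_mem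
        (Finset.mem_filter.2 ⟨hWfin.mem_toFinset.2 ⟨ω, rfl⟩, h.1, h.2⟩)
    exact ⟨V.min'_le _ hWV, V.le_max' _ hWV⟩
  have hWint : Integrable W ℙ := by
    obtain ⟨Cw, hCw⟩ := (hWfin.image (fun t => |t|)).bddAbove
    refine (integrable_const Cw).mono' hWmeas.aestronglyMeasurable ?_
    refine Filter.Eventually.of_forall fun ω => ?_
    rw [Real.norm_eq_abs]
    exact hCw (Set.mem_image_of_mem _ ⟨ω, rfl⟩)
  have hgWint : Integrable (fun ω => g (W ω)) ℙ := by
    obtain ⟨Cg, hCg⟩ := ((hWfin.image g).image (fun t => |t|)).bddAbove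
    refine (integrable_const Cg).mono' (hgmeas.comp hWmeas).aestronglyMeasurable ?_
    refine Filter.Eventually.of_forall fun ω => ?_
    rw [Real.norm_eq_abs]
    exact hCg (Set.mem_image_of_mem _ (Set.mem_image_of_mem _ ⟨ω, rfl⟩))
  have hconc' := hconc.subset hsub (convex_Icc m M)
  have hcont' := hcont.mono hsub
  rcases hconc'.ae_eq_const_or_lt_map_average hcont' isClosed_Icc hae hWint hgWint with
    hconst | hlt
  · exfalso
    rw [average_eq_integral, hWmean] at hconst
    have h0 : ∀ᵐ ω ∂ℙ, W ω = 0 := hconst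
    have hms : MeasurableSet {ω | W ω = 0} := hWmeas (measurableSet_singleton 0)
    have hcompl : ℙ {ω | W ω = 0}ᶜ = 0 := ae_iff.1 h0
    exact absurd ((prob_compl_eq_zero_iff hms).1 hcompl) (ne_of_lt hWne)
  · rw [average_eq_integral, average_eq_integral, hWmean] at hlt
    have hint_eq : ∫ ω, icmQ (x - W ω) (y + W ω) L = ∫ ω, g (W ω) := by
      refine integral_congr_ae ?_
      filter_upwards [hWbound] with ω h
      exact hform (W ω) ⟨h.1, h.2⟩
    have hg0 : icmQ x y L = g 0 := by
      have := hform 0 ⟨by linarith, hx⟩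
      simpa using this
    rw [hint_eq, hg0]
    exact hlt
end

section
/- Consider an n-player tournament (n ≥ 2) with chip fractions x₁, …, x_n > 0 summing to 1 and prize money m₁ ≥ m₂ ≥ ⋯ ≥ m_n with m₂ > m_n. Suppose player 1 makes a fair bet with player 2: let W be a real random variable taking finitely many values, with E[W] = 0, P(W = 0) < 1, and −x₂ < W < x₁ almost surely, after which player 1 holds x₁ − W, player 2 holds x₂ + W, and all other stacks are unchanged. Then player 1's ICM expected prize money strictly decreases: E[EV₁(x₁ − W, x₂ + W, x₃, …, x_n)] < EV₁(x₁, …, x_n). -/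
open MeasureTheory
open scoped ProbabilityTheory

/-- ICM expected prize money of player `i` in an `n`-player tournament with
prizes `m₁, …, m_n` and chip fractions `x₁, …, x_n`:
`EV_i(x) = Σ_{σ ∈ S_n} m_{σ⁻¹(i)} · p_n(x_{σ(1)}, …, x_{σ(n)})`. -/
noncomputable def icmEV {n : ℕ} (m : Fin n → ℝ) (x : Fin n → ℝ) (i : Fin n) : ℝ :=
  ∑ σ : Equiv.Perm (Fin n), m (σ.symm i) * icmP (List.ofFn fun j => x (σ j))

/-!
Write player 1's equity after a transfer `w` from player 1 to player 2 as
`m₁ - ∑ⱼ (mⱼ - mⱼ₊₁) Tⱼ(w)`, where `Tⱼ(w)` is the probability that player 1 is not among the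
first `j` finishers. Conditioning on the winner, `Tⱼ₊₁` is a sum of products of the winner's share
`(c + e w) / (C + E w)` with the `Tⱼ` of the remaining players. As long as only player 1 loses
chips as `w` grows and the total does not grow, these shares are nonnegative, increasing and
convex, so by induction every `Tⱼ` is increasing and convex. Once player 2 has won, the remaining
total decreases strictly in `w`, the shares become strictly convex, and so `Tⱼ` is strictly
convex for `2 ≤ j ≤ n - 1`. Since `m₂ > mₙ`, some gap `mⱼ - mⱼ₊₁` with `2 ≤ j ≤ n - 1` is
positive, so the equity is strictly concave on `(-x₂, x₁)`, and the strict Jensen inequality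
concludes.
-/

section

open Finset Equiv

section SumConvex

variable {𝕜 E β ι : Type*} [Semiring 𝕜] [PartialOrder 𝕜] [AddCommMonoid E] [SMul 𝕜 E]
  [AddCommMonoid β] [PartialOrder β] [IsOrderedCancelAddMonoid β] [Module 𝕜 β] {s : Set E}
  {t : Finset ι} {f : ι → E → β}

theorem convexOn_sum (hs : Convex 𝕜 s) (h : ∀ i ∈ t, ConvexOn 𝕜 s (f i)) :
    ConvexOn 𝕜 s fun x => ∑ i ∈ t, f i x := by
  classical
  induction t using Finset.induction_on with
  | empty => simpa using convexOn_const (0 : β) hs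
  | insert i t hi ih =>
    simp only [sum_insert hi]
    exact (h i (mem_insert_self i t)).add (ih fun j hj => h j (mem_insert_of_mem hj))

theorem strictConvexOn_sum_of_mem {i₀ : ι} (hi₀ : i₀ ∈ t) (h₀ : StrictConvexOn 𝕜 s (f i₀))
    (h : ∀ i ∈ t, ConvexOn 𝕜 s (f i)) : StrictConvexOn 𝕜 s fun x => ∑ i ∈ t, f i x := by
  classical
  exact (h₀.add_convexOn (convexOn_sum h₀.1 fun i hi => h i (mem_of_mem_erase hi))).congr
    fun x _ => add_sum_erase t (f · x) hi₀

end SumConvex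

section RealConvex

variable {E : Type*} [AddCommGroup E] [Module ℝ E] {s : Set E} {f g : E → ℝ}

theorem StrictConvexOn.mul (hf : StrictConvexOn ℝ s f) (hg : ConvexOn ℝ s g)
    (hf₀ : ∀ x ∈ s, 0 ≤ f x) (hg₀ : ∀ x ∈ s, 0 < g x) (hfg : MonovaryOn f g s) :
    StrictConvexOn ℝ s (f * g) := by
  refine ⟨hf.1, fun x hx y hy hxy a b ha hb hab => ?_⟩
  have hz := hf.1 hx hy ha.le hb.le hab
  have hf' := hf.2 hx hy hxy ha hb hab
  have hg' := hg.2 hx hy ha.le hb.le hab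
  have hfg' := hfg.smul_add_smul_le_smul_add_smul hx hy
  simp only [smul_eq_mul, Pi.mul_apply] at hf' hg' hfg' ⊢
  have hfxy : 0 ≤ a * f x + b * f y := by
    have := hf₀ x hx; have := hf₀ y hy; positivity
  calc f (a • x + b • y) * g (a • x + b • y)
      < (a * f x + b * f y) * g (a • x + b • y) := mul_lt_mul_of_pos_right hf' (hg₀ _ hz)
    _ ≤ (a * f x + b * f y) * (a * g x + b * g y) := mul_le_mul_of_nonneg_left hg' hfxy
    _ ≤ a * (f x * g x) + b * (f y * g y) := by
      obtain rfl : b = 1 - a := by linarith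
      nlinarith [mul_le_mul_of_nonneg_left hfg' (mul_nonneg ha.le hb.le)]

theorem StrictConvexOn.const_mul {c : ℝ} (hc : 0 < c) (hf : StrictConvexOn ℝ s f) :
    StrictConvexOn ℝ s fun x => c * f x :=
  ⟨hf.1, fun x hx y hy hxy a b ha hb hab => by
    have := mul_lt_mul_of_pos_left (hf.2 hx hy hxy ha hb hab) hc
    simp only [smul_eq_mul] at this ⊢
    linarith⟩

end RealConvex

section Affine

variable {s : Set ℝ} {α β γ δ : ℝ}

theorem convexOn_affine (hs : Convex ℝ s) (α β : ℝ) : ConvexOn ℝ s fun w => α + β * w :=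
  ⟨hs, fun _ _ _ _ _ _ _ _ hab => le_of_eq <| by
    simp only [smul_eq_mul]
    linear_combination (-α) * hab⟩

theorem monotoneOn_affine (hβ : 0 ≤ β) : MonotoneOn (fun w => α + β * w) s :=
  fun _ _ _ _ hxy => by simpa using mul_le_mul_of_nonneg_left hxy hβ

theorem strictConvexOn_inv_affine (hs : Convex ℝ s) (hδ : δ ≠ 0)
    (hpos : ∀ w ∈ s, 0 < γ + δ * w) : StrictConvexOn ℝ s fun w => (γ + δ * w)⁻¹ := by
  refine ⟨hs, fun x hx y hy hxy a b ha hb hab => ?_⟩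
  have hne : γ + δ * x ≠ γ + δ * y := fun h => hxy (mul_left_cancel₀ hδ (by linarith))
  have key := (strictConvexOn_zpow (m := -1) (by norm_num) (by norm_num)).2
    (hpos x hx) (hpos y hy) hne ha hb hab
  simp only [zpow_neg_one, smul_eq_mul] at key ⊢
  rwa [show γ + δ * (a * x + b * y) = a * (γ + δ * x) + b * (γ + δ * y) by
    linear_combination (-γ) * hab]

theorem convexOn_inv_affine (hs : Convex ℝ s) (hpos : ∀ w ∈ s, 0 < γ + δ * w) :
    ConvexOn ℝ s fun w => (γ + δ * w)⁻¹ := by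
  rcases eq_or_ne δ 0 with rfl | hδ
  · simpa using convexOn_const γ⁻¹ hs
  · exact (strictConvexOn_inv_affine hs hδ hpos).convexOn

theorem monotoneOn_inv_affine (hδ : δ ≤ 0) (hpos : ∀ w ∈ s, 0 < γ + δ * w) :
    MonotoneOn (fun w => (γ + δ * w)⁻¹) s :=
  fun _ _ y hy hxy => inv_anti₀ (hpos y hy) (by nlinarith)

theorem convexOn_affine_div_affine (hs : Convex ℝ s) (hβ : 0 ≤ β) (hδ : δ ≤ 0)
    (hnum : ∀ w ∈ s, 0 ≤ α + β * w) (hden : ∀ w ∈ s, 0 < γ + δ * w) :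
    ConvexOn ℝ s fun w => (α + β * w) / (γ + δ * w) :=
  ((convexOn_affine hs α β).mul (convexOn_inv_affine hs hden) hnum
    (fun w hw => (inv_pos.2 (hden w hw)).le)
    ((monotoneOn_affine hβ).monovaryOn (monotoneOn_inv_affine hδ hden))).congr
    fun _ _ => (div_eq_mul_inv _ _).symm

theorem monotoneOn_affine_div_affine (hβ : 0 ≤ β) (hδ : δ ≤ 0)
    (hnum : ∀ w ∈ s, 0 ≤ α + β * w) (hden : ∀ w ∈ s, 0 < γ + δ * w) :
    MonotoneOn (fun w => (α + β * w) / (γ + δ * w)) s :=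
  ((monotoneOn_affine hβ).mul (monotoneOn_inv_affine hδ hden) hnum
    (fun w hw => (inv_pos.2 (hden w hw)).le)).congr fun _ _ => (div_eq_mul_inv _ _).symm

theorem strictConvexOn_affine_div_affine (hs : Convex ℝ s) (hβ : 0 ≤ β) (hδ : δ < 0)
    (hnum : ∀ w ∈ s, 0 < α + β * w) (hden : ∀ w ∈ s, 0 < γ + δ * w) :
    StrictConvexOn ℝ s fun w => (α + β * w) / (γ + δ * w) :=
  ((strictConvexOn_inv_affine hs hδ.ne hden).mul (convexOn_affine hs α β)
    (fun w hw => (inv_pos.2 (hden w hw)).le) hnum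
    ((monotoneOn_inv_affine hδ.le hden).monovaryOn (monotoneOn_affine hβ))).congr
    fun _ _ => by simp only [Pi.mul_apply, div_eq_mul_inv, mul_comm]

end Affine

theorem sum_add_mul_eq {ι : Type*} (t : Finset ι) (c e : ι → ℝ) (w : ℝ) :
    ∑ i ∈ t, (c i + e i * w) = ∑ i ∈ t, c i + (∑ i ∈ t, e i) * w := by
  rw [sum_add_distrib, sum_mul]

theorem sum_comp_mul_eq_sub_sum_tail {ι : Type*} (s : Finset ι) (g : ι → ℕ) (f : ℕ → ℝ)
    (P : ι → ℝ) {N : ℕ} (hg : ∀ i ∈ s, g i ≤ N) :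
    ∑ i ∈ s, f (g i) * P i
      = f 0 * ∑ i ∈ s, P i - ∑ j ∈ range N, (f j - f (j + 1)) * ∑ i ∈ s with j + 1 ≤ g i, P i := by
  have hf (i) (hi : i ∈ s) :
      f (g i) = f 0 - ∑ j ∈ range N, if j + 1 ≤ g i then f j - f (j + 1) else 0 := by
    rw [← sum_filter, show (range N).filter (· + 1 ≤ g i) = range (g i) by
      ext j; simp only [mem_filter, mem_range]; have := hg i hi; omega, sum_range_sub']
    ring
  simp only [mul_sum, sum_filter, mul_ite, mul_zero]
  rw [sum_comm (s := range N), ← sum_sub_distrib]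
  refine sum_congr rfl fun i hi => ?_
  rw [hf i hi, sub_mul, sum_mul]
  simp only [ite_mul, zero_mul]

theorem exists_succ_lt_of_lt {α : Type*} [LinearOrder α] {f : ℕ → α} {a b : ℕ} (hab : a ≤ b)
    (h : f b < f a) : ∃ j, a ≤ j ∧ j < b ∧ f (j + 1) < f j := by
  induction b, hab using Nat.le_induction with
  | base => exact absurd h (lt_irrefl _)
  | succ b hab ih =>
    by_cases hb : f (b + 1) < f b
    · exact ⟨b, hab, b.lt_succ_self, hb⟩
    · obtain ⟨j, hj, hjb, hdrop⟩ := ih (lt_of_le_of_lt (not_lt.1 hb) h)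
      exact ⟨j, hj, hjb.trans b.lt_succ_self, hdrop⟩

section Jensen

variable {Ω α : Type*} [MeasurableSpace Ω] {μ : Measure Ω}

theorem integrable_comp_of_finite_range [IsFiniteMeasure μ] [MeasurableSpace α]
    [MeasurableSingletonClass α] {W : Ω → α} (hW : Measurable W) (hfin : (Set.range W).Finite)
    (φ : α → ℝ) : Integrable (fun ω => φ (W ω)) μ := by
  have := hfin.to_subtype
  obtain ⟨C, hC⟩ := (hfin.image fun v => ‖φ v‖).bddAbove
  exact Integrable.of_bound
    ((measurable_of_finite (α := Set.range W) (φ ∘ Subtype.val)).comp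
      (hW.subtype_mk (h := Set.mem_range_self))).aestronglyMeasurable C
    (ae_of_all _ fun ω => hC ⟨W ω, Set.mem_range_self ω, rfl⟩)

theorem StrictConcaveOn.integral_comp_lt_of_finite_range [IsProbabilityMeasure μ] {I : Set ℝ}
    {g : ℝ → ℝ} (hI : IsOpen I) (hg : StrictConcaveOn ℝ I g) {W : Ω → ℝ} (hW : Measurable W)
    (hfin : (Set.range W).Finite) (hWI : ∀ᵐ ω ∂μ, W ω ∈ I)
    (hW_ne : ¬ W =ᵐ[μ] fun _ => ∫ ω, W ω ∂μ) :
    ∫ ω, g (W ω) ∂μ < g (∫ ω, W ω ∂μ) := by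
  -- Strict Jensen needs a closed set: take the hull of the finitely many values of `W` in `I`.
  set K := convexHull ℝ (Set.range W ∩ I)
  have hKI : K ⊆ I := convexHull_min Set.inter_subset_right hg.1
  have hjensen := (hg.subset hKI (convex_convexHull ℝ _)).ae_eq_const_or_lt_map_average
    ((hg.concaveOn.continuousOn hI).mono hKI)
    ((hfin.inter_of_left I).isCompact_convexHull (𝕜 := ℝ)).isClosed
    (hWI.mono fun ω h => subset_convexHull ℝ _ ⟨Set.mem_range_self ω, h⟩)
    (integrable_comp_of_finite_range hW hfin id) (integrable_comp_of_finite_range hW hfin g)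
  simp only [average_eq_integral] at hjensen
  exact hjensen.resolve_left hW_ne

end Jensen

/-- `icmP` in sequential form: each finisher is drawn with probability proportional to its stack
among the players still left. -/
noncomputable def plackettLuce : List ℝ → ℝ
  | [] => 1
  | a :: l => a / (a + l.sum) * plackettLuce l

theorem plackettLuce_pos {l : List ℝ} (h : ∀ x ∈ l, 0 < x) : 0 < plackettLuce l := by
  induction l with
  | nil => exact one_pos
  | cons a l ih =>
    have hl : ∀ x ∈ l, 0 < x := fun x hx => h x (List.mem_cons_of_mem a hx)
    have ha : 0 < a := h a List.mem_cons_self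
    have hsum : 0 ≤ l.sum := List.sum_nonneg fun x hx => (hl x hx).le
    exact mul_pos (div_pos ha (by linarith)) (ih hl)

theorem plackettLuce_eq_prod_div (l : List ℝ) :
    plackettLuce l = l.prod / ∏ i ∈ range l.length, (l.drop i).sum := by
  induction l with
  | nil => simp [plackettLuce]
  | cons a l ih =>
    rw [plackettLuce, ih, div_mul_div_comm, List.length_cons, prod_range_succ']
    simp [mul_comm]

theorem icmP_eq_plackettLuce {l : List ℝ} (h : l.sum = 1) : icmP l = plackettLuce l := by
  obtain ⟨a, l, rfl⟩ : ∃ a l', l = a :: l' := List.exists_cons_of_ne_nil (by rintro rfl; simp at h)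
  rw [icmP, plackettLuce_eq_prod_div, List.length_cons, prod_range_succ', List.drop_zero, h,
    mul_one, Nat.add_sub_cancel]
  congr 1
  refine prod_congr rfl fun i _ => ?_
  linarith [List.sum_take_add_sum_drop (a :: l) (i + 1)]

/-- The players other than `p`, labelled as in `Equiv.Perm.decomposeFin`. -/
def others {k : ℕ} (p : Fin (k + 1)) (j : Fin k) : Fin (k + 1) := swap 0 p j.succ

theorem sum_eq_add_sum_others {M : Type*} [AddCommMonoid M] {k : ℕ} (y : Fin (k + 1) → M)
    (p : Fin (k + 1)) : ∑ i, y i = y p + ∑ j, y (others p j) := by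
  rw [← Equiv.sum_comp (swap 0 p) y, Fin.sum_univ_succ, swap_apply_left]
  rfl

theorem swap_zero_apply_ne_zero {k : ℕ} {p a : Fin (k + 1)} (h : p ≠ a) : swap 0 p a ≠ 0 := by
  rw [Ne, swap_apply_eq_iff, swap_apply_left]
  exact h.symm

/-- The label of `a` among `others p`. -/
def othersIndex {k : ℕ} {p a : Fin (k + 1)} (h : p ≠ a) : Fin k :=
  (swap 0 p a).pred (swap_zero_apply_ne_zero h)

theorem others_ne_of_ne_othersIndex {k : ℕ} {p a : Fin (k + 1)} (h : p ≠ a) {j : Fin k}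
    (hj : j ≠ othersIndex h) : others p j ≠ a := by
  contrapose! hj
  rw [othersIndex, eq_comm, Fin.pred_eq_iff_eq_succ, ← hj, others, swap_apply_self]

theorem plackettLuce_decomposeFin {k : ℕ} (y : Fin (k + 1) → ℝ) (p : Fin (k + 1))
    (τ : Perm (Fin k)) :
    plackettLuce (List.ofFn fun j => y (Perm.decomposeFin.symm (p, τ) j))
      = (y p / ∑ i, y i) * plackettLuce (List.ofFn fun j => y (others p (τ j))) := by
  have hsum := sum_eq_add_sum_others y p
  simp only [List.ofFn_succ, plackettLuce, Perm.decomposeFin_symm_apply_zero,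
    Perm.decomposeFin_symm_apply_succ, List.sum_ofFn, others] at hsum ⊢
  rw [Equiv.sum_comp τ (fun j => y (swap 0 p j.succ)), ← hsum]

theorem sum_plackettLuce_perm : ∀ {k : ℕ} (y : Fin k → ℝ), (∀ i, 0 < y i) →
    ∑ σ : Perm (Fin k), plackettLuce (List.ofFn fun j => y (σ j)) = 1
  | 0, _, _ => by simp [plackettLuce]
  | k + 1, y, hy => by
    rw [← Equiv.sum_comp Perm.decomposeFin.symm, Fintype.sum_prod_type]
    simp only [plackettLuce_decomposeFin, ← mul_sum]
    have hrest (p : Fin (k + 1)) :=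
      sum_plackettLuce_perm (fun j => y (others p j)) (fun j => hy _)
    simp only [hrest, mul_one, ← sum_div]
    exact div_self (sum_pos (fun i _ => hy i) univ_nonempty).ne'

/-- The probability that `a` is not among the first `t` finishers (places are 0-based). -/
noncomputable def tailProb {k : ℕ} (y : Fin k → ℝ) (a : Fin k) (t : ℕ) : ℝ :=
  ∑ σ : Perm (Fin k) with t ≤ (σ.symm a : ℕ), plackettLuce (List.ofFn fun j => y (σ j))

section tailProb

variable {k : ℕ} {y : Fin k → ℝ}

theorem tailProb_zero (hy : ∀ i, 0 < y i) (a : Fin k) : tailProb y a 0 = 1 := by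
  simpa [tailProb] using sum_plackettLuce_perm y hy

theorem plackettLuce_ofFn_pos (hy : ∀ i, 0 < y i) (σ : Perm (Fin k)) :
    0 < plackettLuce (List.ofFn fun j => y (σ j)) :=
  plackettLuce_pos fun _ hx => by
    obtain ⟨j, rfl⟩ := List.mem_ofFn.mp hx
    exact hy _

theorem tailProb_nonneg (hy : ∀ i, 0 < y i) (a : Fin k) (t : ℕ) : 0 ≤ tailProb y a t :=
  sum_nonneg fun σ _ => (plackettLuce_ofFn_pos hy σ).le

theorem tailProb_pos (hy : ∀ i, 0 < y i) (a : Fin k) {t : ℕ} (ht : t < k) :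
    0 < tailProb y a t := by
  refine sum_pos' (fun σ _ => (plackettLuce_ofFn_pos hy σ).le)
    ⟨swap a ⟨t, ht⟩, mem_filter.mpr ⟨mem_univ _, ?_⟩, plackettLuce_ofFn_pos hy _⟩
  simp

end tailProb

theorem decomposeFin_symm_symm_apply_self {k : ℕ} (p : Fin (k + 1)) (τ : Perm (Fin k)) :
    (Perm.decomposeFin.symm (p, τ)).symm p = 0 := by
  rw [Equiv.symm_apply_eq, Perm.decomposeFin_symm_apply_zero]

theorem decomposeFin_symm_symm_apply_of_ne {k : ℕ} {p a : Fin (k + 1)} (h : p ≠ a)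
    (τ : Perm (Fin k)) :
    (Perm.decomposeFin.symm (p, τ)).symm a
      = (τ.symm (othersIndex h)).succ := by
  rw [Equiv.symm_apply_eq, Perm.decomposeFin_symm_apply_succ, Equiv.apply_symm_apply, othersIndex,
    Fin.succ_pred, swap_apply_self]

theorem tailProb_succ {k : ℕ} (y : Fin (k + 1) → ℝ) (a : Fin (k + 1)) (t : ℕ) :
    tailProb y a (t + 1) = ∑ p : {p // p ≠ a}, (y p / ∑ i, y i) *
      tailProb (fun j => y (others p j)) (othersIndex p.2) t := by
  rw [tailProb, sum_filter, ← Equiv.sum_comp Perm.decomposeFin.symm, Fintype.sum_prod_type,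
    Fintype.sum_eq_add_sum_subtype_ne _ a,
    sum_eq_zero fun τ _ => by simp [decomposeFin_symm_symm_apply_self], zero_add]
  refine sum_congr rfl fun p _ => ?_
  simp only [decomposeFin_symm_symm_apply_of_ne p.2, Fin.val_succ, add_le_add_iff_right,
    plackettLuce_decomposeFin, tailProb, sum_filter, mul_sum, mul_ite, mul_zero]

structure AdmissibleTransfer {k : ℕ} (s : Set ℝ) (a : Fin k) (c e : Fin k → ℝ) : Prop where
  pos : ∀ w ∈ s, ∀ i, 0 < c i + e i * w
  slope_nonneg : ∀ i, i ≠ a → 0 ≤ e i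
  sum_slope_nonpos : ∑ i, e i ≤ 0

namespace AdmissibleTransfer

section Succ

variable {s : Set ℝ} {k : ℕ} {a p : Fin (k + 1)} {c e : Fin (k + 1) → ℝ}
  (h : AdmissibleTransfer s a c e)
include h

theorem rest (hp : p ≠ a) :
    AdmissibleTransfer s (othersIndex hp) (fun j => c (others p j)) (fun j => e (others p j)) where
  pos w hw _ := h.pos w hw _
  slope_nonneg _ hj := h.slope_nonneg _ (others_ne_of_ne_othersIndex hp hj)
  sum_slope_nonpos := by
    linarith [sum_eq_add_sum_others e p, h.slope_nonneg p hp, h.sum_slope_nonpos]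

theorem share_pos (p : Fin (k + 1)) {w : ℝ} (hw : w ∈ s) :
    0 < (c p + e p * w) / ∑ i, (c i + e i * w) :=
  div_pos (h.pos w hw p) (sum_pos (fun i _ => h.pos w hw i) univ_nonempty)

theorem convexOn_monotoneOn_share (hs : Convex ℝ s) (hp : p ≠ a) :
    ConvexOn ℝ s (fun w => (c p + e p * w) / ∑ i, (c i + e i * w)) ∧
      MonotoneOn (fun w => (c p + e p * w) / ∑ i, (c i + e i * w)) s := by
  have hden (w) (hw : w ∈ s) : 0 < ∑ i, c i + (∑ i, e i) * w := by
    rw [← sum_add_mul_eq]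
    exact sum_pos (fun i _ => h.pos w hw i) univ_nonempty
  simp only [sum_add_mul_eq]
  exact ⟨convexOn_affine_div_affine hs (h.slope_nonneg p hp) h.sum_slope_nonpos
      (fun w hw => (h.pos w hw p).le) hden,
    monotoneOn_affine_div_affine (h.slope_nonneg p hp) h.sum_slope_nonpos
      (fun w hw => (h.pos w hw p).le) hden⟩

theorem strictConvexOn_share (hs : Convex ℝ s) (hp : p ≠ a) (hE : ∑ i, e i < 0) :
    StrictConvexOn ℝ s (fun w => (c p + e p * w) / ∑ i, (c i + e i * w)) := by
  have hden (w) (hw : w ∈ s) : 0 < ∑ i, c i + (∑ i, e i) * w := by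
    rw [← sum_add_mul_eq]
    exact sum_pos (fun i _ => h.pos w hw i) univ_nonempty
  simp only [sum_add_mul_eq]
  exact strictConvexOn_affine_div_affine hs (h.slope_nonneg p hp) hE (fun w hw => h.pos w hw p)
    hden

theorem convexOn_monotoneOn_share_mul (hs : Convex ℝ s) (hp : p ≠ a) {T : ℝ → ℝ}
    (hT : ConvexOn ℝ s T ∧ MonotoneOn T s) (hT₀ : ∀ w ∈ s, 0 ≤ T w) :
    ConvexOn ℝ s (fun w => (c p + e p * w) / (∑ i, (c i + e i * w)) * T w) ∧
      MonotoneOn (fun w => (c p + e p * w) / (∑ i, (c i + e i * w)) * T w) s := by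
  obtain ⟨hconv, hmono⟩ := h.convexOn_monotoneOn_share hs hp
  have hshare₀ (w) (hw : w ∈ s) := (h.share_pos p hw).le
  exact ⟨hconv.mul hT.1 hshare₀ hT₀ (hmono.monovaryOn hT.2), hmono.mul hT.2 hshare₀ hT₀⟩

end Succ

variable {s : Set ℝ}

theorem tailProb_convexOn_monotoneOn (hs : Convex ℝ s) (t : ℕ) :
    ∀ {k : ℕ} {a : Fin k} {c e : Fin k → ℝ}, AdmissibleTransfer s a c e →
      ConvexOn ℝ s (fun w => tailProb (fun i => c i + e i * w) a t) ∧
        MonotoneOn (fun w => tailProb (fun i => c i + e i * w) a t) s := by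
  induction t with
  | zero =>
    intro k a c e h
    have hone : Set.EqOn (fun _ => 1) (fun w => tailProb (fun i => c i + e i * w) a 0) s :=
      fun w hw => (tailProb_zero (h.pos w hw) a).symm
    exact ⟨(convexOn_const 1 hs).congr hone, monotoneOn_const.congr hone⟩
  | succ t ih =>
    rintro (_ | k) a c e h
    · exact a.elim0
    have hterm (p : {p // p ≠ a}) := h.convexOn_monotoneOn_share_mul hs p.2 (ih (h.rest p.2))
      fun w hw => tailProb_nonneg ((h.rest p.2).pos w hw) _ _
    simp only [tailProb_succ]
    exact ⟨convexOn_sum hs fun p _ => (hterm p).1,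
      fun x hx y hy hxy => sum_le_sum fun p _ => (hterm p).2 hx hy hxy⟩

theorem tailProb_strictConvexOn_of_sum_slope_neg (hs : Convex ℝ s) {k : ℕ} {a : Fin k}
    {c e : Fin k → ℝ} (h : AdmissibleTransfer s a c e) (hE : ∑ i, e i < 0) {t : ℕ}
    (ht : 1 ≤ t) (htk : t < k) :
    StrictConvexOn ℝ s (fun w => tailProb (fun i => c i + e i * w) a t) := by
  obtain ⟨t, rfl⟩ := Nat.exists_eq_add_of_le' ht
  obtain ⟨k, rfl⟩ : ∃ k', k = k' + 1 := ⟨k - 1, by omega⟩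
  obtain ⟨p, hp⟩ := Fintype.exists_ne_of_one_lt_card (by rw [Fintype.card_fin]; omega) a
  have hrest := tailProb_convexOn_monotoneOn hs t (h.rest hp)
  simp only [tailProb_succ]
  refine strictConvexOn_sum_of_mem (mem_univ ⟨p, hp⟩) ?_ fun q _ => ?_
  · exact (h.strictConvexOn_share hs hp hE).mul hrest.1 (fun w hw => (h.share_pos p hw).le)
      (fun w hw => tailProb_pos ((h.rest hp).pos w hw) _ (by omega))
      ((h.convexOn_monotoneOn_share hs hp).2.monovaryOn hrest.2)
  · exact (h.convexOn_monotoneOn_share_mul hs q.2 (tailProb_convexOn_monotoneOn hs t (h.rest q.2))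
      fun w hw => tailProb_nonneg ((h.rest q.2).pos w hw) _ _).1

theorem tailProb_strictConvexOn_of_slope_pos (hs : Convex ℝ s) {k : ℕ} {a b : Fin k}
    {c e : Fin k → ℝ} (h : AdmissibleTransfer s a c e) (hba : b ≠ a) (hb : 0 < e b) {t : ℕ}
    (ht : 2 ≤ t) (htk : t < k) :
    StrictConvexOn ℝ s (fun w => tailProb (fun i => c i + e i * w) a t) := by
  obtain ⟨t, rfl⟩ := Nat.exists_eq_add_of_le' (le_trans one_le_two ht)
  obtain ⟨k, rfl⟩ : ∃ k', k = k' + 1 := ⟨k - 1, by omega⟩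
  have hrest := tailProb_strictConvexOn_of_sum_slope_neg hs (h.rest hba)
    (by linarith [sum_eq_add_sum_others e b, h.sum_slope_nonpos]) (t := t) (by omega) (by omega)
  simp only [tailProb_succ]
  refine strictConvexOn_sum_of_mem (mem_univ ⟨b, hba⟩) ?_ fun q _ => ?_
  · obtain ⟨hconv, hmono⟩ := h.convexOn_monotoneOn_share hs hba
    refine (hrest.mul hconv (fun w hw => tailProb_nonneg ((h.rest hba).pos w hw) _ _)
      (fun w hw => h.share_pos b hw)
      ((tailProb_convexOn_monotoneOn hs t (h.rest hba)).2.monovaryOn hmono)).congr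
      fun w _ => mul_comm _ _
  · exact (h.convexOn_monotoneOn_share_mul hs q.2 (tailProb_convexOn_monotoneOn hs t (h.rest q.2))
      fun w hw => tailProb_nonneg ((h.rest q.2).pos w hw) _ _).1

end AdmissibleTransfer

theorem icmEV_eq_sub_sum_tailProb {n : ℕ} (m : Fin n → ℝ) {y : Fin n → ℝ} (hy : ∀ i, 0 < y i)
    (hsum : ∑ i, y i = 1) (a : Fin n) (f : ℕ → ℝ) (hf : ∀ j : Fin n, f j = m j) :
    icmEV m y a = f 0 - ∑ j ∈ range (n - 1), (f j - f (j + 1)) * tailProb y a (j + 1) := by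
  have hP (σ : Perm (Fin n)) : icmP (List.ofFn fun j => y (σ j))
      = plackettLuce (List.ofFn fun j => y (σ j)) :=
    icmP_eq_plackettLuce (by rw [List.sum_ofFn, Equiv.sum_comp σ y, hsum])
  simp only [icmEV, hP, ← hf]
  refine (sum_comp_mul_eq_sub_sum_tail univ (fun σ : Perm (Fin n) => (σ.symm a : ℕ)) f
    (fun σ => plackettLuce (List.ofFn fun j => y (σ j))) (N := n - 1) fun σ _ => ?_).trans ?_
  · omega
  · rw [sum_plackettLuce_perm y hy, mul_one]
    rfl

def betSlope {n : ℕ} (a b : Fin n) (j : Fin n) : ℝ := if j = a then -1 else if j = b then 1 else 0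

section Bet

variable {n : ℕ} {a b : Fin n}

theorem sum_betSlope (hab : a ≠ b) : ∑ j, betSlope a b j = 0 := by
  simp [betSlope, sum_ite, filter_ne', hab.symm, filter_eq']

theorem bet_stacks_eq (x : Fin n → ℝ) (w : ℝ) :
    (fun j => if j = a then x j - w else if j = b then x j + w else x j)
      = fun j => x j + betSlope a b j * w := by
  funext j
  simp only [betSlope]
  split_ifs <;> ring

theorem admissibleTransfer_betSlope {x : Fin n → ℝ} (hx : ∀ i, 0 < x i) (hab : a ≠ b) :
    AdmissibleTransfer (Set.Ioo (-x b) (x a)) a x (betSlope a b) where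
  pos w hw i := by
    obtain ⟨hwb, hwa⟩ := hw
    simp only [betSlope]
    split_ifs with hia hib
    · subst hia; linarith
    · subst hib; linarith
    · linarith [hx i]
  slope_nonneg i hi := by simp only [betSlope, if_neg hi]; split_ifs <;> norm_num
  sum_slope_nonpos := (sum_betSlope hab).le

end Bet

theorem icmEV_bet_strictConcaveOn {n : ℕ} {x : Fin n → ℝ} (hx : ∀ i, 0 < x i)
    (hxsum : ∑ i, x i = 1) {m : Fin n → ℝ} (hm : Antitone m)
    (hgap : ∃ i j : Fin n, 0 < (i : ℕ) ∧ m j < m i) {a b : Fin n} (hab : a ≠ b) :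
    StrictConcaveOn ℝ (Set.Ioo (-x b) (x a))
      fun w => icmEV m (fun j => if j = a then x j - w else if j = b then x j + w else x j) a := by
  have h := admissibleTransfer_betSlope hx hab
  have hs : Convex ℝ (Set.Ioo (-x b) (x a)) := convex_Ioo _ _
  set f : ℕ → ℝ := fun j => if h : j < n then m ⟨j, h⟩ else 0
  have hf_anti (j : ℕ) (hj : j + 1 < n) : 0 ≤ f j - f (j + 1) := by
    simp only [f, dif_pos hj, dif_pos (j.lt_succ_self.trans hj)]
    exact sub_nonneg.2 (hm (Fin.mk_le_mk.2 j.le_succ))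
  obtain ⟨i, k, hi, hik⟩ := hgap
  obtain ⟨j₀, hj₀, hj₀k, hdrop⟩ := exists_succ_lt_of_lt (f := f) (a := i) (b := k)
    (Fin.lt_def.1 (hm.reflect_lt hik)).le (by simpa [f] using hik)
  have hkn := k.isLt
  have hS : StrictConvexOn ℝ (Set.Ioo (-x b) (x a)) fun w => ∑ j ∈ range (n - 1),
      (f j - f (j + 1)) * tailProb (fun i => x i + betSlope a b i * w) a (j + 1) := by
    refine strictConvexOn_sum_of_mem (show j₀ ∈ range (n - 1) from mem_range.2 (by omega)) ?_
      fun j hj => ?_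
    · refine (h.tailProb_strictConvexOn_of_slope_pos hs hab.symm ?_ ?_ ?_).const_mul
        (sub_pos.2 hdrop)
      · simp [betSlope, hab.symm]
      all_goals omega
    · exact (h.tailProb_convexOn_monotoneOn hs (j + 1)).1.smul
        (hf_anti j (by rw [mem_range] at hj; omega))
  refine ((neg_strictConcaveOn_iff.2 hS).add_const (f 0)).congr fun w hw => ?_
  simp only [bet_stacks_eq x w, Pi.add_apply, Pi.neg_apply]
  rw [icmEV_eq_sub_sum_tailProb m (h.pos w hw)
    (by rw [sum_add_mul_eq, hxsum, sum_betSlope hab, zero_mul, add_zero]) a f fun j => by simp [f]]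
  ring

end

/-- Theorem 1 (risk aversion): under the ICM, a fair bet between player 1 and
player 2 strictly lowers player 1's expected prize money, provided prizes are
nonincreasing and some player will not earn as much as second-place money. -/
theorem icm_fair_bet_lowers_expected_value
    {Ω : Type*} [MeasureSpace Ω] [IsProbabilityMeasure (ℙ : Measure Ω)]
    (n : ℕ) (hn : 2 ≤ n)
    (x : Fin n → ℝ) (hx : ∀ i, 0 < x i) (hxsum : ∑ i, x i = 1)
    (m : Fin n → ℝ) (hm : ∀ i j : Fin n, i ≤ j → m j ≤ m i)
    (hm2 : m ⟨n - 1, by omega⟩ < m ⟨1, by omega⟩)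
    (W : Ω → ℝ) (hWmeas : Measurable W) (hWfin : (Set.range W).Finite)
    (hWmean : ∫ ω, W ω = 0)
    (hWne : ℙ {ω | W ω = 0} < 1)
    (hWbound : ∀ᵐ ω ∂ℙ, -(x ⟨1, by omega⟩) < W ω ∧ W ω < x ⟨0, by omega⟩) :
    ∫ ω, icmEV m
        (fun j => if j = ⟨0, by omega⟩ then x j - W ω
          else if j = ⟨1, by omega⟩ then x j + W ω else x j)
        ⟨0, by omega⟩
      < icmEV m x ⟨0, by omega⟩ := by
  have hW_ne : ¬ W =ᵐ[ℙ] fun _ => ∫ ω, W ω := by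
    rw [hWmean]
    exact fun h => hWne.ne ((prob_compl_eq_zero_iff (hWmeas (measurableSet_singleton 0))).1
      (ae_iff.1 h))
  have hconcave := icmEV_bet_strictConcaveOn hx hxsum (fun i j hij => hm i j hij)
    ⟨_, _, one_pos, hm2⟩ (a := ⟨0, by omega⟩) (b := ⟨1, by omega⟩) (by simp [Fin.ext_iff])
  simpa [hWmean] using
    hconcave.integral_comp_lt_of_finite_range isOpen_Ioo hWmeas hWfin hWbound hW_ne
end

section
/- Consider an n-player tournament with chip fractions x₁, …, x_n > 0 summing to 1 and prizes m₁ = m₂ = 1 and m₃ = ⋯ = m_n = 0 (each of the top two finishers is paid 1). Let S ⊆ {1, …, n} be a set of at least two players, with player c ∉ S, engaging in a fair bet: for each j ∈ S let W_j be a real random variable taking finitely many values, jointly satisfying Σ_{j∈S} W_j = 0 almost surely, E[W_j] = 0 for each j, not all W_j almost surely 0, and 0 < x_j + W_j and Σ_{j∈S}(x_j + W_j) < 1 − Σ_{i∉S} x_i + Σ_{j∈S} x_j almost surely (i.e., all post-bet fractions remain in (0,1) with total 1). Then player c's ICM expected prize money strictly increases after the bet. -/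
open MeasureTheory
open scoped ProbabilityTheory

/-!
With the top two places paid, player `c` finishes first with probability `x c` and second,
behind `j`, with probability `x j * x c / (1 - x j)`, so `c`'s value is
`x c * (1 + ∑ j ≠ c, f (x j))` with `f a = a / (1 - a)`. A bet among the players of `S` leaves
`x c` and the stacks outside `S` unchanged, so it changes this value by
`x c * ∑ j ∈ S, (f (x j + W j) - f (x j))`. Now
`f (a + w) - f a = w / (1 - a) ^ 2 + w ^ 2 / ((1 - a) ^ 2 * (1 - a - w))`: the linear term has
expectation zero and the quadratic one is nonnegative, and positive in expectation unless
`W j = 0` almost surely.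
-/

open Finset Equiv Equiv.Perm

/-- `icmOrderProb t l` is the ICM probability that the players with stacks `l` take the first
`l.length` places in this order, when the total number of chips is `t`. -/
noncomputable def icmOrderProb : ℝ → List ℝ → ℝ
  | _, [] => 1
  | t, a :: l => a / t * icmOrderProb (t - a) l

lemma icmOrderProb_eq_div (t : ℝ) (l : List ℝ) :
    icmOrderProb t l = l.prod / ∏ i ∈ range l.length, (t - (l.take i).sum) := by
  induction l generalizing t with
  | nil => simp [icmOrderProb]
  | cons a l ih =>
    rw [icmOrderProb, ih, List.prod_cons, List.length_cons, prod_range_succ', div_mul_div_comm]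
    simp [sub_sub, mul_comm]

lemma icmP_eq_icmOrderProb (l : List ℝ) : icmP l = icmOrderProb 1 l := by
  rw [icmOrderProb_eq_div]
  cases l with
  | nil => simp [icmP]
  | cons a l => simp [icmP, prod_range_succ']

lemma sum_perm_eq_sum_decomposeFin {M : Type*} [AddCommMonoid M] {n : ℕ}
    (F : Perm (Fin (n + 1)) → M) :
    ∑ σ, F σ = ∑ p, ∑ τ, F (decomposeFin.symm (p, τ)) :=
  (Equiv.sum_comp _ F).symm.trans (Fintype.sum_prod_type _)

/-- The stacks of the players other than `p`, indexed as in `Equiv.Perm.decomposeFin`. -/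
def stacksExcept {n : ℕ} (y : Fin (n + 1) → ℝ) (p : Fin (n + 1)) (i : Fin n) : ℝ :=
  y (swap 0 p i.succ)

lemma sum_stacksExcept {n : ℕ} (y : Fin (n + 1) → ℝ) (p : Fin (n + 1)) :
    ∑ i, stacksExcept y p i = ∑ i, y i - y p := by
  have h := Equiv.sum_comp (swap 0 p) y
  rw [Fin.sum_univ_succ, swap_apply_left] at h
  simp only [stacksExcept]
  linarith

lemma icmOrderProb_decomposeFin_symm {n : ℕ} (t : ℝ) (y : Fin (n + 1) → ℝ) (p : Fin (n + 1))
    (τ : Perm (Fin n)) :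
    icmOrderProb t (List.ofFn fun i => y (decomposeFin.symm (p, τ) i))
      = y p / t * icmOrderProb (t - y p) (List.ofFn fun i => stacksExcept y p (τ i)) := by
  simp [List.ofFn_succ, icmOrderProb, stacksExcept]

lemma sum_perm_icmOrderProb {n : ℕ} (t : ℝ) (y : Fin n → ℝ) (hy : ∀ i, 0 < y i)
    (ht : ∑ i, y i = t) :
    ∑ σ : Perm (Fin n), icmOrderProb t (List.ofFn fun i => y (σ i)) = 1 := by
  induction n generalizing t with
  | zero => simp [icmOrderProb]
  | succ n ih =>
    have ht0 : t ≠ 0 := by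
      rw [← ht]; exact (sum_pos (fun i _ => hy i) univ_nonempty).ne'
    have hrest (p : Fin (n + 1)) : ∑ τ : Perm (Fin n),
        icmOrderProb (t - y p) (List.ofFn fun i => stacksExcept y p (τ i)) = 1 :=
      ih _ _ (fun i => hy _) (by rw [sum_stacksExcept, ht])
    simp only [sum_perm_eq_sum_decomposeFin, icmOrderProb_decomposeFin_symm, ← mul_sum, hrest,
      mul_one, ← sum_div, ht, div_self ht0]

lemma sum_perm_icmOrderProb_first {n : ℕ} (t : ℝ) (y : Fin (n + 1) → ℝ) (hy : ∀ i, 0 < y i)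
    (ht : ∑ i, y i = t) (d : Fin (n + 1)) :
    ∑ σ : Perm (Fin (n + 1)),
      (if σ 0 = d then icmOrderProb t (List.ofFn fun i => y (σ i)) else 0) = y d / t := by
  have hrest (p : Fin (n + 1)) :
      ∑ τ : Perm (Fin n), icmOrderProb (t - y p) (List.ofFn fun i => stacksExcept y p (τ i)) = 1 :=
    sum_perm_icmOrderProb _ _ (fun i => hy _) (by rw [sum_stacksExcept, ht])
  simp only [sum_perm_eq_sum_decomposeFin, decomposeFin_symm_apply_zero, sum_ite_irrel,
    sum_const_zero, icmOrderProb_decomposeFin_symm, ← mul_sum, hrest, mul_one, sum_ite_eq',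
    mem_univ, if_true]

lemma sum_perm_icmOrderProb_second {n : ℕ} (t : ℝ) (y : Fin (n + 2) → ℝ) (hy : ∀ i, 0 < y i)
    (ht : ∑ i, y i = t) (c : Fin (n + 2)) :
    ∑ σ : Perm (Fin (n + 2)),
      (if σ 1 = c then icmOrderProb t (List.ofFn fun i => y (σ i)) else 0)
      = ∑ p ∈ univ.erase c, y p / t * (y c / (t - y p)) := by
  have hfirst (p : Fin (n + 2)) (d : Fin (n + 1)) :
      ∑ τ : Perm (Fin (n + 1)), (if τ 0 = d then
        icmOrderProb (t - y p) (List.ofFn fun i => stacksExcept y p (τ i)) else 0)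
        = stacksExcept y p d / (t - y p) :=
    sum_perm_icmOrderProb_first (n := n) _ (stacksExcept y p) (fun i => hy _)
      (by rw [sum_stacksExcept, ht]) d
  have hc (τ : Perm (Fin (n + 1))) : decomposeFin.symm (c, τ) 1 ≠ c := by
    rw [decomposeFin_symm_apply_one, Ne, swap_apply_eq_iff, swap_apply_right]
    exact Fin.succ_ne_zero _
  rw [sum_perm_eq_sum_decomposeFin, ← sum_erase_add _ _ (mem_univ c),
    sum_eq_zero fun τ _ => if_neg (hc τ), add_zero]
  refine sum_congr rfl fun p hp => ?_
  obtain ⟨d, hd⟩ := Fin.exists_succ_eq.2 (show swap 0 p c ≠ 0 by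
    rw [Ne, swap_apply_eq_iff, swap_apply_left]; exact (ne_of_mem_erase hp).symm)
  have hiff (τ : Perm (Fin (n + 1))) : decomposeFin.symm (p, τ) 1 = c ↔ τ 0 = d := by
    rw [decomposeFin_symm_apply_one, swap_apply_eq_iff, ← hd, Fin.succ_inj]
  have hyd : stacksExcept y p d = y c := by rw [stacksExcept, hd, swap_apply_self]
  calc ∑ τ : Perm (Fin (n + 1)), (if decomposeFin.symm (p, τ) 1 = c then
          icmOrderProb t (List.ofFn fun i => y (decomposeFin.symm (p, τ) i)) else 0)
      = ∑ τ : Perm (Fin (n + 1)), y p / t * (if τ 0 = d then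
          icmOrderProb (t - y p) (List.ofFn fun i => stacksExcept y p (τ i)) else 0) :=
        sum_congr rfl fun τ _ => by
          simp only [hiff, icmOrderProb_decomposeFin_symm, mul_ite, mul_zero]
    _ = y p / t * (y c / (t - y p)) := by rw [← mul_sum, hfirst, hyd]

lemma topTwo_prize_eq {n : ℕ} (i : Fin (n + 2)) :
    (if (i : ℕ) < 2 then (1 : ℝ) else 0) = (if i = 0 then 1 else 0) + (if i = 1 then 1 else 0) := by
  rcases i with ⟨_ | _ | k, hk⟩ <;> simp [Fin.ext_iff]

lemma icmEV_topTwo {n : ℕ} {x : Fin (n + 2) → ℝ} (hx : ∀ i, 0 < x i) (hxsum : ∑ i, x i = 1)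
    (c : Fin (n + 2)) :
    icmEV (fun j : Fin (n + 2) => if (j : ℕ) < 2 then (1 : ℝ) else 0) x c
      = x c * (1 + ∑ j ∈ univ.erase c, x j / (1 - x j)) := by
  simp only [icmEV, topTwo_prize_eq, symm_apply_eq, eq_comm (a := c), add_mul, ite_mul, one_mul,
    zero_mul, sum_add_distrib, icmP_eq_icmOrderProb, sum_perm_icmOrderProb_first 1 x hx hxsum,
    sum_perm_icmOrderProb_second 1 x hx hxsum, mul_add, mul_sum]
  congr 1
  · ring
  · exact sum_congr rfl fun j _ => by ring

lemma icmEV_topTwo_eq_add {n : ℕ} {x y : Fin (n + 2) → ℝ} (hx : ∀ i, 0 < x i)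
    (hxsum : ∑ i, x i = 1) (hy : ∀ i, 0 < y i) (hysum : ∑ i, y i = 1) {S : Finset (Fin (n + 2))}
    {c : Fin (n + 2)} (hc : c ∉ S) (hxy : ∀ j ∉ S, y j = x j) :
    icmEV (fun j : Fin (n + 2) => if (j : ℕ) < 2 then (1 : ℝ) else 0) y c
      = icmEV (fun j : Fin (n + 2) => if (j : ℕ) < 2 then (1 : ℝ) else 0) x c
        + x c * ∑ j ∈ S, (y j / (1 - y j) - x j / (1 - x j)) := by
  have hS : S ⊆ univ.erase c := fun j hj => mem_erase.2 ⟨ne_of_mem_of_not_mem hj hc, mem_univ j⟩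
  have hdiff : ∑ j ∈ univ.erase c, (y j / (1 - y j) - x j / (1 - x j))
      = ∑ j ∈ S, (y j / (1 - y j) - x j / (1 - x j)) :=
    (sum_subset hS fun j _ hj => by rw [hxy j hj, sub_self]).symm
  rw [icmEV_topTwo hy hysum, icmEV_topTwo hx hxsum, hxy c hc, ← hdiff, sum_sub_distrib]
  ring

section Bet

variable {n : ℕ} {x w : Fin n → ℝ} {S : Finset (Fin n)} {c : Fin n}

lemma sum_lt_one_of_notMem (hx : ∀ i, 0 < x i) (hxsum : ∑ i, x i = 1) (hc : c ∉ S) :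
    ∑ j ∈ S, x j < 1 := by
  have := sum_le_univ_sum_of_nonneg (s := insert c S) fun j => (hx j).le
  rw [sum_insert hc, hxsum] at this
  linarith [hx c]

lemma add_lt_one_of_bet (hx : ∀ i, 0 < x i) (hxsum : ∑ i, x i = 1) (hc : c ∉ S)
    (hw : ∑ j ∈ S, w j = 0) (hpos : ∀ j ∈ S, 0 < x j + w j) {j : Fin n} (hj : j ∈ S) :
    x j + w j < 1 :=
  calc x j + w j ≤ ∑ i ∈ S, (x i + w i) := single_le_sum (fun i hi => (hpos i hi).le) hj
    _ = ∑ i ∈ S, x i := by rw [sum_add_distrib, hw, add_zero]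
    _ < 1 := sum_lt_one_of_notMem hx hxsum hc

lemma sum_ite_add_eq_one (hxsum : ∑ i, x i = 1) (hw : ∑ j ∈ S, w j = 0) :
    ∑ j, (if j ∈ S then x j + w j else x j) = 1 := by
  rw [← sum_add_sum_compl S, sum_congr rfl fun j hj => if_pos hj,
    sum_congr rfl fun j hj => if_neg (mem_compl.1 hj), sum_add_distrib, hw, add_zero,
    sum_add_sum_compl, hxsum]

end Bet

lemma icmEV_topTwo_bet {n : ℕ} {x w : Fin (n + 2) → ℝ} {S : Finset (Fin (n + 2))}
    {c : Fin (n + 2)} (hx : ∀ i, 0 < x i) (hxsum : ∑ i, x i = 1) (hc : c ∉ S)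
    (hw : ∑ j ∈ S, w j = 0) (hpos : ∀ j ∈ S, 0 < x j + w j) :
    icmEV (fun j : Fin (n + 2) => if (j : ℕ) < 2 then (1 : ℝ) else 0)
        (fun j => if j ∈ S then x j + w j else x j) c
      = icmEV (fun j : Fin (n + 2) => if (j : ℕ) < 2 then (1 : ℝ) else 0) x c
        + x c * ∑ j ∈ S, ((x j + w j) / (1 - (x j + w j)) - x j / (1 - x j)) := by
  have hpos' (j : Fin (n + 2)) : 0 < if j ∈ S then x j + w j else x j := by
    split_ifs with hj
    exacts [hpos j hj, hx j]
  rw [icmEV_topTwo_eq_add hx hxsum hpos' (sum_ite_add_eq_one hxsum hw) hc fun j hj => if_neg hj]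
  exact congrArg _ (congrArg _ (sum_congr rfl fun j hj => by rw [if_pos hj]))

lemma integrable_of_finite_range {Ω E : Type*} [MeasurableSpace Ω] [NormedAddCommGroup E]
    {μ : Measure Ω} [IsFiniteMeasure μ] {f : Ω → E} (hf : AEStronglyMeasurable f μ)
    (hfin : (Set.range f).Finite) : Integrable f μ := by
  obtain ⟨C, hC⟩ := (hfin.image (‖·‖)).bddAbove
  exact .of_bound hf C (.of_forall fun ω => hC ⟨f ω, Set.mem_range_self ω, rfl⟩)

lemma div_one_sub_add_sub_div_one_sub {a w : ℝ} (ha : a ≠ 1) (haw : a + w ≠ 1) :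
    (a + w) / (1 - (a + w)) - a / (1 - a)
      = w / (1 - a) ^ 2 + w ^ 2 / ((1 - a) ^ 2 * (1 - (a + w))) := by
  have h1 : 1 - a ≠ 0 := sub_ne_zero.2 (Ne.symm ha)
  have h2 : 1 - (a + w) ≠ 0 := sub_ne_zero.2 (Ne.symm haw)
  field_simp
  ring

section FairBet

variable {Ω : Type*} [MeasurableSpace Ω] {μ : Measure Ω} [IsProbabilityMeasure μ] {a : ℝ}
  {W : Ω → ℝ}

lemma integrable_comp_of_finite_range_s8 (hWm : Measurable W) (hWfin : (Set.range W).Finite)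
    {g : ℝ → ℝ} (hg : Measurable g) : Integrable (fun ω => g (W ω)) μ :=
  integrable_of_finite_range (hg.comp hWm).aestronglyMeasurable
    ((hWfin.image g).subset (Set.range_comp g W).le)

lemma integral_div_one_sub_add_sub (hWm : Measurable W) (hWfin : (Set.range W).Finite)
    (hmean : ∫ ω, W ω ∂μ = 0) (ha : a < 1) (haW : ∀ᵐ ω ∂μ, a + W ω < 1) :
    ∫ ω, ((a + W ω) / (1 - (a + W ω)) - a / (1 - a)) ∂μ
      = ∫ ω, W ω ^ 2 / ((1 - a) ^ 2 * (1 - (a + W ω))) ∂μ := by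
  rw [integral_congr_ae (haW.mono fun ω h => div_one_sub_add_sub_div_one_sub ha.ne h.ne),
    integral_add (integrable_comp_of_finite_range_s8 hWm hWfin (g := fun w => w / (1 - a) ^ 2)
        (by fun_prop))
      (integrable_comp_of_finite_range_s8 hWm hWfin
        (g := fun w => w ^ 2 / ((1 - a) ^ 2 * (1 - (a + w)))) (by fun_prop)),
    integral_div, hmean, zero_div, zero_add]

lemma integral_div_one_sub_add_sub_nonneg (hWm : Measurable W)
    (hWfin : (Set.range W).Finite) (hmean : ∫ ω, W ω ∂μ = 0) (ha : a < 1)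
    (haW : ∀ᵐ ω ∂μ, a + W ω < 1) :
    0 ≤ ∫ ω, ((a + W ω) / (1 - (a + W ω)) - a / (1 - a)) ∂μ := by
  rw [integral_div_one_sub_add_sub hWm hWfin hmean ha haW]
  exact integral_nonneg_of_ae (haW.mono fun ω h => by have := sub_pos.2 h; positivity)

lemma integral_div_one_sub_add_sub_pos (hWm : Measurable W) (hWfin : (Set.range W).Finite)
    (hmean : ∫ ω, W ω ∂μ = 0) (ha : a < 1) (haW : ∀ᵐ ω ∂μ, a + W ω < 1) (hW : ¬ ∀ᵐ ω ∂μ, W ω = 0) :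
    0 < ∫ ω, ((a + W ω) / (1 - (a + W ω)) - a / (1 - a)) ∂μ := by
  rw [integral_div_one_sub_add_sub hWm hWfin hmean ha haW]
  have hq : 0 ≤ᵐ[μ] fun ω => W ω ^ 2 / ((1 - a) ^ 2 * (1 - (a + W ω))) :=
    haW.mono fun ω h => by have := sub_pos.2 h; positivity
  refine (integral_nonneg_of_ae hq).lt_of_ne fun h => hW ?_
  have hq0 := (integral_eq_zero_iff_of_nonneg_ae hq (integrable_comp_of_finite_range_s8 hWm hWfin
    (g := fun w => w ^ 2 / ((1 - a) ^ 2 * (1 - (a + w)))) (by fun_prop))).1 h.symm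
  filter_upwards [hq0, haW] with ω hω h
  have : 0 < (1 - a) ^ 2 * (1 - (a + W ω)) := by
    have := sub_pos.2 h; have := sub_pos.2 ha; positivity
  simpa [this.ne'] using hω

end FairBet

theorem icm_two_places_paid_bystander_gains_general
    {Ω : Type*} [MeasureSpace Ω] [IsProbabilityMeasure (ℙ : Measure Ω)]
    (n : ℕ) (x : Fin n → ℝ) (hx : ∀ i, 0 < x i) (hxsum : ∑ i, x i = 1)
    (S : Finset (Fin n)) (c : Fin n) (hc : c ∉ S)
    (W : Fin n → Ω → ℝ)
    (hWmeas : ∀ j, Measurable (W j)) (hWfin : ∀ j, (Set.range (W j)).Finite)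
    (hWsum : ∀ᵐ ω ∂ℙ, ∑ j ∈ S, W j ω = 0)
    (hWmean : ∀ j ∈ S, ∫ ω, W j ω = 0)
    (hWne : ¬ ∀ j ∈ S, ∀ᵐ ω ∂ℙ, W j ω = 0)
    (hWbound : ∀ᵐ ω ∂ℙ, (∀ j ∈ S, 0 < x j + W j ω)
      ∧ ∑ j ∈ S, (x j + W j ω) < 1 - ∑ i ∈ Sᶜ, x i + ∑ j ∈ S, x j) :
    icmEV (fun j : Fin n => if (j : ℕ) < 2 then (1 : ℝ) else 0) x c
      < ∫ ω, icmEV (fun j : Fin n => if (j : ℕ) < 2 then (1 : ℝ) else 0)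
          (fun j => if j ∈ S then x j + W j ω else x j) c := by
  simp only [not_forall] at hWne
  obtain ⟨j₀, hj₀S, hj₀⟩ := hWne
  obtain ⟨k, rfl⟩ : ∃ k, n = k + 2 := by
    have : (j₀ : ℕ) ≠ c := Fin.val_ne_of_ne (ne_of_mem_of_not_mem hj₀S hc)
    exact ⟨n - 2, by omega⟩
  have hx1 (j) (hj : j ∈ S) : x j < 1 :=
    (single_le_sum (fun i _ => (hx i).le) hj).trans_lt (sum_lt_one_of_notMem hx hxsum hc)
  have hxW1 (j) (hj : j ∈ S) : ∀ᵐ ω ∂ℙ, x j + W j ω < 1 := by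
    filter_upwards [hWsum, hWbound] with ω hsum hpos
    exact add_lt_one_of_bet hx hxsum hc hsum hpos.1 hj
  have hEV : ∀ᵐ ω ∂ℙ, icmEV (fun j : Fin (k + 2) => if (j : ℕ) < 2 then (1 : ℝ) else 0)
        (fun j => if j ∈ S then x j + W j ω else x j) c
      = icmEV (fun j : Fin (k + 2) => if (j : ℕ) < 2 then (1 : ℝ) else 0) x c
        + x c * ∑ j ∈ S, ((x j + W j ω) / (1 - (x j + W j ω)) - x j / (1 - x j)) := by
    filter_upwards [hWsum, hWbound] with ω hsum hpos
    exact icmEV_topTwo_bet hx hxsum hc hsum hpos.1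
  have hgain (j : Fin (k + 2)) : Integrable
      (fun ω => (x j + W j ω) / (1 - (x j + W j ω)) - x j / (1 - x j)) ℙ :=
    integrable_comp_of_finite_range_s8 (hWmeas j) (hWfin j)
      (g := fun w => (x j + w) / (1 - (x j + w)) - x j / (1 - x j)) (by fun_prop)
  rw [integral_congr_ae hEV, integral_add (integrable_const _)
      ((integrable_finsetSum S fun j _ => hgain j).const_mul _), integral_const,
    integral_const_mul, integral_finsetSum S fun j _ => hgain j, probReal_univ, one_smul]
  refine lt_add_of_pos_right _ (mul_pos (hx c) (sum_pos' (fun j hj => ?_) ⟨j₀, hj₀S, ?_⟩))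
  · exact integral_div_one_sub_add_sub_nonneg (hWmeas j) (hWfin j) (hWmean j hj) (hx1 j hj)
      (hxW1 j hj)
  · exact integral_div_one_sub_add_sub_pos (hWmeas j₀) (hWfin j₀) (hWmean j₀ hj₀S) (hx1 j₀ hj₀S)
      (hxW1 j₀ hj₀S) hj₀

/-- When only the top two places are paid (1 each), a fair bet among any set `S`
of two or more players strictly raises the ICM expected prize money of any
player `c ∉ S` not involved in the bet. -/
theorem icm_two_places_paid_bystander_gains
    {Ω : Type*} [MeasureSpace Ω] [IsProbabilityMeasure (ℙ : Measure Ω)]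
    (n : ℕ) (x : Fin n → ℝ) (hx : ∀ i, 0 < x i) (hxsum : ∑ i, x i = 1)
    (S : Finset (Fin n)) (hS : 2 ≤ S.card) (c : Fin n) (hc : c ∉ S)
    (W : Fin n → Ω → ℝ)
    (hWmeas : ∀ j, Measurable (W j)) (hWfin : ∀ j, (Set.range (W j)).Finite)
    (hWsum : ∀ᵐ ω ∂ℙ, ∑ j ∈ S, W j ω = 0)
    (hWmean : ∀ j ∈ S, ∫ ω, W j ω = 0)
    (hWne : ¬ ∀ j ∈ S, ∀ᵐ ω ∂ℙ, W j ω = 0)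
    (hWbound : ∀ᵐ ω ∂ℙ, (∀ j ∈ S, 0 < x j + W j ω)
      ∧ ∑ j ∈ S, (x j + W j ω) < 1 - ∑ i ∈ Sᶜ, x i + ∑ j ∈ S, x j) :
    icmEV (fun j : Fin n => if (j : ℕ) < 2 then (1 : ℝ) else 0) x c
      < ∫ ω, icmEV (fun j : Fin n => if (j : ℕ) < 2 then (1 : ℝ) else 0)
          (fun j => if j ∈ S then x j + W j ω else x j) c :=
  icm_two_places_paid_bystander_gains_general n x hx hxsum S c hc W hWmeas hWfin hWsum hWmean hWne
    hWbound
end
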